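/- arXiv:1905.10153 — 8 statements merged into one kernel-verified Lean document; each statement's English description precedes it below -/
import Mathlib

section
/- An abelian p-group of order p^λ (λ ≥ 2) that has exactly p+1 subgroups of order p^r for every r with 1 ≤ r ≤ λ−1 is isomorphic to C_{p^{λ−1}} × C_p. -/
open Subgroup

private lemma aux_orderOf_dvd_card {G : Type*} [Group G] [Finite G] {H : Subgroup G}
    {x : G} (hx : x ∈ H) : orderOf x ∣ Nat.card H := by
  have hle : Subgroup.zpowers x ≤ H := (Subgroup.zpowers_le).2 hx
  have := Subgroup.card_dvd_of_le hle
  rwa [Nat.card_zpowers] at this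

private lemma aux_eq_zpowers {G : Type*} [Group G] [Finite G] {p : ℕ} (hp : p.Prime)
    {H : Subgroup G} (hH : Nat.card H = p) {x : G} (hx : x ∈ H) (hx1 : x ≠ 1) :
    H = Subgroup.zpowers x := by
  have hle : Subgroup.zpowers x ≤ H := (Subgroup.zpowers_le).2 hx
  have hdvd : orderOf x ∣ p := hH ▸ aux_orderOf_dvd_card hx
  have hord : orderOf x = p :=
    ((Nat.dvd_prime hp).1 hdvd).resolve_left (by simpa [orderOf_eq_one_iff] using hx1)
  exact (Subgroup.eq_of_le_of_card_ge hle (by rw [hH, Nat.card_zpowers, hord])).symm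

/-- Lower bound: `p+1` subgroups of order `p` give at least `p+1` solutions of `x^p = 1`. -/
private lemma aux_lower {G : Type*} [Group G] [Finite G] {p : ℕ} (hp : p.Prime)
    (h : Nat.card {H : Subgroup G // Nat.card H = p} = p + 1) :
    p + 1 ≤ Nat.card {x : G // x ^ p = 1} := by
  classical
  have hexists : ∀ H : {H : Subgroup G // Nat.card H = p}, ∃ x, x ∈ H.1 ∧ x ≠ (1 : G) := by
    intro H
    rcases H.1.bot_or_exists_ne_one with hbot | hex
    · exfalso
      have := H.2
      rw [hbot, Subgroup.card_bot] at this
      exact hp.one_lt.ne this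
    · exact hex
  choose f hmem hne using hexists
  have hpow : ∀ H : {H : Subgroup G // Nat.card H = p}, (f H) ^ p = 1 := by
    intro H
    have : orderOf (f H) ∣ p := H.2 ▸ aux_orderOf_dvd_card (hmem H)
    exact orderOf_dvd_iff_pow_eq_one.1 this
  have hinj : Function.Injective (fun H : {H : Subgroup G // Nat.card H = p} =>
      (⟨f H, hpow H⟩ : {x : G // x ^ p = 1})) := by
    intro H K hFK
    have hx : f H = f K := congrArg Subtype.val hFK
    apply Subtype.ext
    rw [aux_eq_zpowers hp H.2 (hmem H) (hne H), hx,
      ← aux_eq_zpowers hp K.2 (hmem K) (hne K)]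
  calc p + 1 = Nat.card {H : Subgroup G // Nat.card H = p} := h.symm
    _ ≤ Nat.card {x : G // x ^ p = 1} := Nat.card_le_card_of_injective _ hinj

private lemma aux_cyclic_zpowers {G : Type*} [Group G] (g : G) :
    IsCyclic ↥(Subgroup.zpowers g) := by
  refine ⟨⟨⟨g, Subgroup.mem_zpowers g⟩, ?_⟩⟩
  rintro ⟨x, hx⟩
  obtain ⟨k, hk⟩ := Subgroup.mem_zpowers_iff.1 hx
  exact ⟨k, Subtype.ext (by simpa using hk)⟩

/-- Upper bound: at most `p` solutions of `x^p = 1` inside a cyclic subgroup. -/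
private lemma aux_upper {G : Type*} [Group G] [Finite G] {p : ℕ} (hp : 0 < p) (g : G) :
    Nat.card {x : G // x ^ p = 1 ∧ x ∈ Subgroup.zpowers g} ≤ p := by
  classical
  have : Fintype ↥(Subgroup.zpowers g) := Fintype.ofFinite _
  have hcyc : IsCyclic ↥(Subgroup.zpowers g) := aux_cyclic_zpowers g
  have hinj : Function.Injective
      (fun x : {x : G // x ^ p = 1 ∧ x ∈ Subgroup.zpowers g} =>
        (⟨⟨x.1, x.2.2⟩, Subtype.ext (by simpa using x.2.1)⟩ :
          {y : ↥(Subgroup.zpowers g) // y ^ p = 1})) := by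
    intro x y hxy
    exact Subtype.ext (congrArg (Subtype.val ∘ Subtype.val) hxy)
  have h1 : Nat.card {x : G // x ^ p = 1 ∧ x ∈ Subgroup.zpowers g} ≤
      Nat.card {y : ↥(Subgroup.zpowers g) // y ^ p = 1} :=
    Nat.card_le_card_of_injective _ hinj
  have h2 : Nat.card {y : ↥(Subgroup.zpowers g) // y ^ p = 1} ≤ p := by
    rw [Nat.card_eq_fintype_card, Fintype.card_subtype]
    have := IsCyclic.card_pow_eq_one_le (α := ↥(Subgroup.zpowers g)) (n := p) hp
    convert this using 2
  exact h1.trans h2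

/-- If every element satisfies `x ^ p^m = 1`, then `G` is covered by the subgroups of
order `p ^ m`. -/
private lemma aux_union_bound {G : Type*} [Group G] [Finite G] {p m : ℕ} (hp : p.Prime)
    (hall : ∀ x : G, x ^ p ^ m = 1) (hdvd : p ^ m ∣ Nat.card G) :
    Nat.card G ≤ Nat.card {H : Subgroup G // Nat.card H = p ^ m} * p ^ m := by
  classical
  have : Fact p.Prime := ⟨hp⟩
  have hFG : Fintype G := Fintype.ofFinite G
  have hex : ∀ x : G, ∃ H : {H : Subgroup G // Nat.card H = p ^ m}, x ∈ H.1 := by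
    intro x
    have hord : orderOf x ∣ p ^ m := orderOf_dvd_of_pow_eq_one (hall x)
    obtain ⟨j, hj, hoj⟩ := (Nat.dvd_prime_pow hp).1 hord
    obtain ⟨K, hK, hle⟩ := Sylow.exists_subgroup_card_pow_prime_le p hdvd
      (Subgroup.zpowers x) (by rw [Nat.card_zpowers, hoj]) hj
    exact ⟨⟨K, hK⟩, hle (Subgroup.mem_zpowers x)⟩
  choose f hf using hex
  have hIfin : Fintype {H : Subgroup G // Nat.card H = p ^ m} := Fintype.ofFinite _
  rw [Nat.card_eq_fintype_card, Nat.card_eq_fintype_card]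
  calc Fintype.card G
      = ∑ H : {H : Subgroup G // Nat.card H = p ^ m},
          (Finset.univ.filter (fun x => f x = H)).card := by
        rw [← Finset.card_eq_sum_card_fiberwise (f := f) (s := Finset.univ)
          (t := Finset.univ) (fun x _ => Finset.mem_univ _), Finset.card_univ]
    _ ≤ ∑ _H : {H : Subgroup G // Nat.card H = p ^ m}, p ^ m := by
        refine Finset.sum_le_sum fun H _ => ?_
        have hsub : Finset.univ.filter (fun x => f x = H) ⊆ (H.1 : Set G).toFinset := by
          intro x hx
          rw [Set.mem_toFinset]
          have := (Finset.mem_filter.1 hx).2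
          exact this ▸ hf x
        calc (Finset.univ.filter (fun x => f x = H)).card
            ≤ (H.1 : Set G).toFinset.card := Finset.card_le_card hsub
          _ = p ^ m := by rw [Set.toFinset_card, ← Nat.card_eq_fintype_card]; exact H.2
    _ = Fintype.card {H : Subgroup G // Nat.card H = p ^ m} * p ^ m := by
        rw [Finset.sum_const, Finset.card_univ, smul_eq_mul]

theorem abelian_pGroup_min_subgroup_counts_iso
    (p lam : ℕ) (hp : p.Prime) (hlam : 2 ≤ lam)
    (G : Type*) [CommGroup G] (hcard : Nat.card G = p ^ lam)
    (hsub : ∀ r, 1 ≤ r → r ≤ lam - 1 →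
      Nat.card {H : Subgroup G // Nat.card H = p ^ r} = p + 1) :
    Nonempty (G ≃* Multiplicative (ZMod (p ^ (lam - 1)) × ZMod p)) := by
  classical
  have hpfact : Fact p.Prime := ⟨hp⟩
  have hfin : Finite G := Nat.finite_of_card_ne_zero
    (by rw [hcard]; exact (pow_pos hp.pos lam).ne')
  -- the count of subgroups of order p
  have hsub1 : Nat.card {H : Subgroup G // Nat.card H = p} = p + 1 := by
    have := hsub 1 le_rfl (by omega)
    simpa using this
  have hlower : p + 1 ≤ Nat.card {x : G // x ^ p = 1} := aux_lower hp hsub1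
  -- the exponent of G
  obtain ⟨g, hg⟩ := Monoid.exists_orderOf_eq_exponent (Monoid.ExponentExists.of_finite (G := G))
  have hdvd : Monoid.exponent G ∣ p ^ lam := hcard ▸ Group.exponent_dvd_nat_card
  obtain ⟨k, hk, hek⟩ := (Nat.dvd_prime_pow hp).1 hdvd
  -- k ≤ lam - 1 : otherwise G is cyclic and has too few solutions of x^p = 1
  have hk_le : k ≤ lam - 1 := by
    by_contra hcon
    have hklam : k = lam := by omega
    have htop : Subgroup.zpowers g = ⊤ := by
      apply Subgroup.eq_top_of_card_eq
      rw [Nat.card_zpowers, hg, hek, hklam, hcard]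
    have hinj : Function.Injective (fun x : {x : G // x ^ p = 1} =>
        (⟨x.1, x.2, htop ▸ Subgroup.mem_top x.1⟩ :
          {x : G // x ^ p = 1 ∧ x ∈ Subgroup.zpowers g})) := by
      intro x y hxy
      simp only [Subtype.mk.injEq] at hxy
      exact Subtype.ext hxy
    have := (hlower.trans (Nat.card_le_card_of_injective _ hinj)).trans
      (aux_upper hp.pos g)
    omega
  -- k ≥ lam - 1 : otherwise G is covered by too few small subgroups
  have hk_ge : lam - 1 ≤ k := by
    by_contra hcon
    have hkle : k ≤ lam - 2 := by omega
    rcases Nat.lt_or_ge lam 3 with hl2 | hl3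
    · -- lam = 2, so k = 0 and G is trivial: contradiction with card
      have hl2' : lam = 2 := by omega
      have hk0 : k = 0 := by omega
      have : Monoid.exponent G = 1 := by rw [hek, hk0, pow_zero]
      have hsing : Subsingleton G := by
        constructor
        intro a b
        calc a = a ^ 1 := (pow_one a).symm
          _ = 1 := by rw [← this]; exact Monoid.pow_exponent_eq_one a
          _ = b ^ 1 := by rw [← this, Monoid.pow_exponent_eq_one b]
          _ = b := pow_one b
      have : Nat.card G = 1 := Nat.card_eq_one_iff_unique.2 ⟨hsing, ⟨1⟩⟩
      rw [hcard, hl2'] at this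
      nlinarith [hp.two_le]
    · -- lam ≥ 3 : use the union bound at r = lam - 2
      have hall : ∀ x : G, x ^ p ^ (lam - 2) = 1 := by
        intro x
        have h1 : orderOf x ∣ Monoid.exponent G := Monoid.order_dvd_exponent x
        have h2 : Monoid.exponent G ∣ p ^ (lam - 2) := by
          rw [hek]; exact pow_dvd_pow p hkle
        exact orderOf_dvd_iff_pow_eq_one.1 (h1.trans h2)
      have hdvd2 : p ^ (lam - 2) ∣ Nat.card G := by
        rw [hcard]; exact pow_dvd_pow p (by omega)
      have hbound := aux_union_bound hp hall hdvd2
      rw [hsub (lam - 2) (by omega) (by omega), hcard] at hbound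
      have hsplit : p ^ lam = p ^ 2 * p ^ (lam - 2) := by
        rw [← pow_add]; congr 1; omega
      have hp2 : p + 1 < p ^ 2 := by nlinarith [hp.two_le]
      have hppos : 0 < p ^ (lam - 2) := pow_pos hp.pos _
      nlinarith
  have hkeq : k = lam - 1 := le_antisymm hk_le hk_ge
  have hordg : orderOf g = p ^ (lam - 1) := by rw [hg, hek, hkeq]
  set A := Subgroup.zpowers g with hA
  have hcardA : Nat.card A = p ^ (lam - 1) := by rw [hA, Nat.card_zpowers, hordg]
  -- find h of order p outside A
  have hexh : ∃ x : G, x ^ p = 1 ∧ x ∉ A := by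
    by_contra hcon
    push_neg at hcon
    have hinj : Function.Injective (fun x : {x : G // x ^ p = 1} =>
        (⟨x.1, x.2, hcon x.1 x.2⟩ : {x : G // x ^ p = 1 ∧ x ∈ A})) := by
      intro x y hxy
      simp only [Subtype.mk.injEq] at hxy
      exact Subtype.ext hxy
    have := (hlower.trans (Nat.card_le_card_of_injective _ hinj)).trans
      (aux_upper hp.pos g)
    omega
  obtain ⟨h, hhp, hhA⟩ := hexh
  have hh1 : h ≠ 1 := fun hcontra => hhA (hcontra ▸ A.one_mem)
  have hordh : orderOf h = p := by
    have hdvd' : orderOf h ∣ p := orderOf_dvd_of_pow_eq_one hhp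
    exact ((Nat.dvd_prime hp).1 hdvd').resolve_left
      (by simpa [orderOf_eq_one_iff] using hh1)
  set B := Subgroup.zpowers h with hB
  have hcardB : Nat.card B = p := by rw [hB, Nat.card_zpowers, hordh]
  -- A and B are disjoint
  have hdisj : Disjoint A B := by
    rw [Subgroup.disjoint_def]
    intro x hxA hxB
    by_contra hx1
    have hBx : B = Subgroup.zpowers x := aux_eq_zpowers hp hcardB hxB hx1
    have hmemB : h ∈ B := Subgroup.mem_zpowers h
    rw [hBx] at hmemB
    exact hhA (Subgroup.zpowers_le.2 hxA hmemB)
  -- the multiplication map A × B → G is an isomorphism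
  set φ : ↥A × ↥B →* G := (A.subtype).coprod (B.subtype) with hφ
  have hinjφ : Function.Injective φ := by
    rw [injective_iff_map_eq_one]
    rintro ⟨a, b⟩ hab
    have hab' : (a : G) * (b : G) = 1 := hab
    have ha : (a : G) = (b : G)⁻¹ := eq_inv_of_mul_eq_one_left hab'
    have haB : (a : G) ∈ B := ha ▸ B.inv_mem b.2
    have ha1 : (a : G) = 1 := Subgroup.disjoint_def.1 hdisj a.2 haB
    have hb1 : (b : G) = 1 := by
      have := hab'
      rw [ha1, one_mul] at this
      exact this
    exact Prod.ext (Subtype.ext ha1) (Subtype.ext hb1)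
  have hcardAB : Nat.card (↥A × ↥B) = Nat.card G := by
    rw [Nat.card_prod, hcardA, hcardB, hcard, ← pow_succ]
    congr 1
    omega
  have hbij : Function.Bijective φ := (Nat.bijective_iff_injective_and_card φ).2
    ⟨hinjφ, hcardAB⟩
  have e1 : G ≃* ↥A × ↥B := (MulEquiv.ofBijective φ hbij).symm
  -- identify A and B with the cyclic groups
  have hcycA : IsCyclic ↥A := aux_cyclic_zpowers g
  have hcycB : IsCyclic ↥B := aux_cyclic_zpowers h
  have e2 : Multiplicative (ZMod (p ^ (lam - 1))) ≃* ↥A := hcardA ▸ zmodCyclicMulEquiv hcycA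
  have e3 : Multiplicative (ZMod p) ≃* ↥B := hcardB ▸ zmodCyclicMulEquiv hcycB
  exact ⟨e1.trans ((MulEquiv.prodCongr e2.symm e3.symm).trans
    (MulEquiv.prodMultiplicative (G := ZMod (p ^ (lam - 1))) (H := ZMod p)).symm)⟩
end

section
/- An abelian group of type (μ₁, μ₂) with μ₂ ≥ 2 (i.e., G ≅ C_{p^{μ₁}} × C_{p^{μ₂}} with μ₁ ≥ μ₂ ≥ 2) has at least 2p subgroups of order p^{μ₁}. -/
theorem rank_two_type_mu2_ge_two_subgroup_count
    (p mu1 mu2 : ℕ) (hp : p.Prime) (h12 : mu2 ≤ mu1) (h2 : 2 ≤ mu2) :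
    2 * p ≤ Nat.card {H : Subgroup (Multiplicative (ZMod (p ^ mu1) × ZMod (p ^ mu2))) //
      Nat.card H = p ^ mu1} := by
  have hp1 : (0:ℕ) < p ^ mu1 := pow_pos hp.pos _
  have hp2 : (0:ℕ) < p ^ mu2 := pow_pos hp.pos _
  haveI : NeZero (p ^ mu1) := ⟨hp1.ne'⟩
  haveI : NeZero (p ^ mu2) := ⟨hp2.ne'⟩
  set G := Multiplicative (ZMod (p ^ mu1) × ZMod (p ^ mu2))
  -- the map
  let g : ZMod (p ^ mu2) → G := fun t => Multiplicative.ofAdd ((1 : ZMod (p ^ mu1)), t)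
  have hord : ∀ t, orderOf (g t) = p ^ mu1 := by
    intro t
    rw [show g t = Multiplicative.ofAdd ((1 : ZMod (p ^ mu1)), t) from rfl,
      orderOf_ofAdd_eq_addOrderOf, Prod.addOrderOf]
    have h1 : addOrderOf (1 : ZMod (p ^ mu1)) = p ^ mu1 := ZMod.addOrderOf_one _
    have h2' : addOrderOf t ∣ p ^ mu1 := by
      have : addOrderOf t ∣ Nat.card (ZMod (p ^ mu2)) := addOrderOf_dvd_natCard t
      rw [Nat.card_zmod] at this
      exact dvd_trans this (pow_dvd_pow p h12)
    rw [h1]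
    exact Nat.dvd_antisymm (Nat.lcm_dvd dvd_rfl h2') (Nat.dvd_lcm_left _ _)
  have hcard : ∀ t, Nat.card (Subgroup.zpowers (g t)) = p ^ mu1 := by
    intro t; rw [Nat.card_zpowers, hord]
  let f : ZMod (p ^ mu2) → {H : Subgroup G // Nat.card H = p ^ mu1} :=
    fun t => ⟨Subgroup.zpowers (g t), hcard t⟩
  have hinj : Function.Injective f := by
    intro t t' h
    have h' : Subgroup.zpowers (g t) = Subgroup.zpowers (g t') := congrArg Subtype.val h
    have hmem : g t' ∈ Subgroup.zpowers (g t) := h' ▸ Subgroup.mem_zpowers _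
    obtain ⟨k, hk⟩ := hmem
    have hk' : k • ((1 : ZMod (p ^ mu1)), t) = ((1 : ZMod (p ^ mu1)), t') := by
      have := congrArg Multiplicative.toAdd hk
      rw [toAdd_zpow] at this
      simpa [g] using this
    have h1 : (k : ZMod (p ^ mu1)) = 1 := by
      have := congrArg Prod.fst hk'
      simpa [zsmul_eq_mul] using this
    have h2' : (k : ZMod (p ^ mu2)) * t = t' := by
      have := congrArg Prod.snd hk'
      simpa [zsmul_eq_mul] using this
    have hdvd : (p ^ mu2) ∣ (p ^ mu1) := pow_dvd_pow p h12
    have hk2 : (k : ZMod (p ^ mu2)) = 1 := by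
      have := map_intCast (ZMod.castHom hdvd (ZMod (p ^ mu2))) k
      rw [← this, h1, map_one]
    rw [hk2, one_mul] at h2'
    exact h2'
  have hle : Nat.card (ZMod (p ^ mu2)) ≤
      Nat.card {H : Subgroup G // Nat.card H = p ^ mu1} :=
    Nat.card_le_card_of_injective f hinj
  rw [Nat.card_zmod] at hle
  refine le_trans ?_ hle
  calc 2 * p ≤ p * p := Nat.mul_le_mul_right p hp.two_le
    _ = p ^ 2 := (sq p).symm
    _ ≤ p ^ mu2 := Nat.pow_le_pow_right hp.pos h2
end

section
/- The group C_{p^{λ−1}} × C_p has exactly (p+1)(λ−1)+2 subgroups. -/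
namespace SubCount

variable (p m : ℕ)

/-- The ideal of multiples of `p^a` in `ZMod (p^m)`. -/
def Ia (a : ℕ) : Ideal (ZMod (p^m)) := Ideal.span {(p^a : ZMod (p^m))}

/-- Subgroups contained in the first factor. -/
def Ka (a : ℕ) : AddSubgroup (ZMod (p^m) × ZMod p) :=
  (Ia p m a).toAddSubgroup.prod ⊥

/-- Subgroups surjecting onto the second factor. -/
def Wa (a : ℕ) (t : ZMod (p^m)) : AddSubgroup (ZMod (p^m) × ZMod p) where
  carrier := {z | ∃ k : ℤ, z.2 = (k : ZMod p) ∧ z.1 - (k : ZMod (p^m)) * t ∈ Ia p m a}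
  zero_mem' := ⟨0, by simp⟩
  add_mem' := by
    rintro ⟨z1, z2⟩ ⟨w1, w2⟩ ⟨k, hk, hk2⟩ ⟨l, hl, hl2⟩
    replace hk : z2 = (k : ZMod p) := hk
    replace hl : w2 = (l : ZMod p) := hl
    replace hk2 : z1 - (k : ZMod (p^m)) * t ∈ Ia p m a := hk2
    replace hl2 : w1 - (l : ZMod (p^m)) * t ∈ Ia p m a := hl2
    refine ⟨k + l, ?_, ?_⟩
    · show z2 + w2 = _
      rw [hk, hl]; push_cast; ring
    · show z1 + w1 - ((k + l : ℤ) : ZMod (p^m)) * t ∈ Ia p m a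
      convert add_mem hk2 hl2 using 1
      push_cast; ring
  neg_mem' := by
    rintro ⟨z1, z2⟩ ⟨k, hk, hk2⟩
    replace hk : z2 = (k : ZMod p) := hk
    replace hk2 : z1 - (k : ZMod (p^m)) * t ∈ Ia p m a := hk2
    refine ⟨-k, ?_, ?_⟩
    · show -z2 = _
      rw [hk]; push_cast; ring
    · show -z1 - ((-k : ℤ) : ZMod (p^m)) * t ∈ Ia p m a
      convert neg_mem hk2 using 1
      push_cast; ring

lemma mem_Wa_iff (a : ℕ) (t : ZMod (p^m)) (z : ZMod (p^m) × ZMod p) :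
    z ∈ Wa p m a t ↔ ∃ k : ℤ, z.2 = (k : ZMod p) ∧ z.1 - (k : ZMod (p^m)) * t ∈ Ia p m a :=
  Iff.rfl

variable {p m}

lemma primeInt (hp : p.Prime) : Prime (p : ℤ) :=
  Int.prime_iff_natAbs_prime.mpr (by simpa)

lemma mem_Ia_iff (hp : p.Prime) {a : ℕ} (ha : a ≤ m) (x : ℤ) :
    ((x : ZMod (p^m)) ∈ Ia p m a) ↔ (p : ℤ)^a ∣ x := by
  rw [Ia, Ideal.mem_span_singleton]
  constructor
  · rintro ⟨c, hc⟩
    obtain ⟨C, rfl⟩ := ZMod.intCast_surjective (n := p^m) c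
    have h0 : ((x - C * p^a : ℤ) : ZMod (p^m)) = 0 := by push_cast; rw [hc]; ring
    rw [ZMod.intCast_zmod_eq_zero_iff_dvd] at h0
    obtain ⟨k, hk⟩ := h0
    have hx : x = C * p^a + k * p^m := by push_cast at hk ⊢; linarith
    refine hx ▸ dvd_add ⟨C, by ring⟩ ?_
    exact Dvd.dvd.mul_left (pow_dvd_pow (p:ℤ) ha) k
  · rintro ⟨c, hc⟩
    exact ⟨(c : ZMod (p^m)), by rw [hc]; push_cast; ring⟩

lemma Ia_inj (hp : p.Prime) {a b : ℕ} (ha : a ≤ m) (hb : b ≤ m)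
    (h : Ia p m a = Ia p m b) : a = b := by
  have hple : ∀ {x y : ℕ}, x ≤ m → y ≤ m → Ia p m x = Ia p m y → y ≤ x := by
    intro x y hx hy hxy
    have h1 : ((p^x : ℤ) : ZMod (p^m)) ∈ Ia p m x := by
      rw [mem_Ia_iff hp hx]
    have h2 : ((p^x : ℤ) : ZMod (p^m)) ∈ Ia p m y := by rw [← hxy]; exact h1
    rw [mem_Ia_iff hp hy] at h2
    exact (pow_dvd_pow_iff (primeInt hp).ne_zero (primeInt hp).not_unit).mp h2
  exact le_antisymm (hple hb ha h.symm) (hple ha hb h)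

/-- Every ideal of `ZMod (p^m)` is `Ia p m a` for some `a ≤ m`. -/
lemma ideal_eq_Ia (hp : p.Prime) (I : Ideal (ZMod (p^m))) : ∃ a ≤ m, I = Ia p m a := by
  set f := Int.castRingHom (ZMod (p^m)) with hf
  have hsurj : Function.Surjective f := ZMod.intCast_surjective
  obtain ⟨g, hg⟩ := (inferInstance : IsPrincipalIdealRing ℤ).principal (I.comap f)
  have hmem : ((p:ℤ)^m) ∈ I.comap f := by
    rw [Ideal.mem_comap]
    have h1 : f ((p:ℤ)^m) = 0 := by
      have h2 : ((p:ℤ)^m) = ((p^m : ℕ) : ℤ) := by push_cast; ring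
      rw [h2, hf, map_natCast, ZMod.natCast_self]
    rw [h1]
    exact I.zero_mem
  rw [hg] at hmem
  obtain ⟨c, hc⟩ := Submodule.mem_span_singleton.mp hmem
  have hdvd : g ∣ (p:ℤ)^m := ⟨c, by rw [← hc]; simp [smul_eq_mul, mul_comm]⟩
  obtain ⟨a, ha, hass⟩ := (dvd_prime_pow (primeInt hp) m).mp hdvd
  refine ⟨a, ha, ?_⟩
  have hI : I = Ideal.map f (I.comap f) := (Ideal.map_comap_of_surjective f hsurj I).symm
  have hg' : I.comap f = Ideal.span {g} := hg
  rw [hI, hg', Ideal.map_span, Set.image_singleton, Ia]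
  have hass2 : Associated (f g) (f ((p:ℤ)^a)) := hass.map f
  have hspan : Ideal.span {f g} = Ideal.span {f ((p:ℤ)^a)} :=
    le_antisymm (Ideal.span_singleton_le_span_singleton.mpr hass2.symm.dvd)
      (Ideal.span_singleton_le_span_singleton.mpr hass2.dvd)
  have hfp : f ((p:ℤ)^a) = (p : ZMod (p^m))^a := by
    rw [hf, map_pow]; simp
  rw [hspan, hfp]

/-- The part of `H` inside the first factor, as an ideal. -/
def Hcap [NeZero (p^m)] (H : AddSubgroup (ZMod (p^m) × ZMod p)) : Ideal (ZMod (p^m)) where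
  carrier := {x | (x, (0 : ZMod p)) ∈ H}
  zero_mem' := H.zero_mem
  add_mem' := by
    intro x y hx hy
    have := H.add_mem hx hy
    simpa using this
  smul_mem' := by
    intro c x hx
    have h1 : c • x = c.val • x := by
      rw [smul_eq_mul, nsmul_eq_mul, ZMod.natCast_val, ZMod.cast_id]
    simp only [Set.mem_setOf_eq, h1]
    have := H.nsmul_mem hx c.val
    simpa using this

lemma mem_Hcap [NeZero (p^m)] (H : AddSubgroup (ZMod (p^m) × ZMod p)) (x : ZMod (p^m)) :
    x ∈ Hcap H ↔ (x, (0:ZMod p)) ∈ H := Iff.rfl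


lemma Hcap_Ka [NeZero (p^m)] (a : ℕ) : Hcap (Ka p m a) = Ia p m a := by
  ext x
  rw [mem_Hcap]
  simp [Ka, AddSubgroup.mem_prod]

lemma Ia_zero : Ia p m 0 = ⊤ := by
  rw [Ia, pow_zero, Ideal.span_singleton_one]

lemma Hcap_top [NeZero (p^m)] : Hcap (⊤ : AddSubgroup (ZMod (p^m) × ZMod p)) = ⊤ := by
  ext x; simp [mem_Hcap]

lemma Hcap_Wa [NeZero (p^m)] (a : ℕ) (t : ZMod (p^m))
    (ht : (p : ZMod (p^m)) * t ∈ Ia p m a) : Hcap (Wa p m a t) = Ia p m a := by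
  ext x
  rw [mem_Hcap, mem_Wa_iff]
  constructor
  · rintro ⟨k, hk, hmem⟩
    have hpk : (p : ℤ) ∣ k := by
      rw [← ZMod.intCast_zmod_eq_zero_iff_dvd, ← hk]
    obtain ⟨k', rfl⟩ := hpk
    have h1 : ((p * k' : ℤ) : ZMod (p^m)) * t = (k' : ZMod (p^m)) * ((p : ZMod (p^m)) * t) := by
      push_cast; ring
    have h2 : ((p * k' : ℤ) : ZMod (p^m)) * t ∈ Ia p m a := by
      rw [h1]; exact Ideal.mul_mem_left _ _ ht
    have h3 : x = (x - ((p * k' : ℤ) : ZMod (p^m)) * t) + ((p * k' : ℤ) : ZMod (p^m)) * t := by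
      ring
    rw [h3]; exact add_mem hmem h2
  · intro hx
    exact ⟨0, by simp, by simpa using hx⟩

lemma Wa_zero_eq_top [NeZero p] (t : ZMod (p^m)) : Wa p m 0 t = ⊤ := by
  ext z
  simp only [AddSubgroup.mem_top, iff_true, mem_Wa_iff]
  refine ⟨((z.2.val : ℕ) : ℤ), ?_, ?_⟩
  · rw [Int.cast_natCast, ZMod.natCast_val, ZMod.cast_id]
  · rw [Ia_zero]; exact Submodule.mem_top

lemma Wa_le_Wa (a : ℕ) {t t' : ZMod (p^m)} (h : t - t' ∈ Ia p m a) :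
    Wa p m a t ≤ Wa p m a t' := by
  rintro z ⟨k, hk, hmem⟩
  refine ⟨k, hk, ?_⟩
  have heq : z.1 - (k : ZMod (p^m)) * t' = (z.1 - (k : ZMod (p^m)) * t)
      + (k : ZMod (p^m)) * (t - t') := by ring
  rw [heq]
  exact add_mem hmem (Ideal.mul_mem_left _ _ h)

lemma Wa_congr (a : ℕ) {t t' : ZMod (p^m)} (h : t - t' ∈ Ia p m a) :
    Wa p m a t = Wa p m a t' := by
  refine le_antisymm (Wa_le_Wa a h) (Wa_le_Wa a ?_)
  have : t' - t = -(t - t') := by ring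
  rw [this]; exact neg_mem h

lemma eq_Ka [NeZero (p^m)] (H : AddSubgroup (ZMod (p^m) × ZMod p)) (a : ℕ)
    (hI : Hcap H = Ia p m a) (h2 : ∀ z ∈ H, z.2 = (0 : ZMod p)) : H = Ka p m a := by
  ext z
  constructor
  · intro hz
    have hz2 : z.2 = 0 := h2 z hz
    have hz1 : z.1 ∈ Ia p m a := by
      rw [← hI, mem_Hcap]
      have : (z.1, (0:ZMod p)) = z := by rw [← hz2]
      rwa [this]
    exact AddSubgroup.mem_prod.mpr ⟨hz1, by simpa using hz2⟩
  · intro hz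
    obtain ⟨hz1, hz2⟩ := AddSubgroup.mem_prod.mp hz
    have hz2' : z.2 = 0 := by simpa using hz2
    have : (z.1, (0:ZMod p)) ∈ H := by rw [← mem_Hcap, hI]; exact hz1
    have hzz : z = (z.1, (0:ZMod p)) := by rw [← hz2']
    rwa [hzz]

lemma eq_Wa [NeZero p] [NeZero (p^m)] (H : AddSubgroup (ZMod (p^m) × ZMod p)) (a : ℕ)
    (hI : Hcap H = Ia p m a) (w : ZMod (p^m) × ZMod p) (hw : w ∈ H) (hw2 : w.2 = 1) :
    H = Wa p m a w.1 := by
  ext z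
  rw [mem_Wa_iff]
  constructor
  · intro hz
    refine ⟨(z.2.val : ℤ), ?_, ?_⟩
    · rw [Int.cast_natCast, ZMod.natCast_val, ZMod.cast_id]
    · have hmem : z - z.2.val • w ∈ H := sub_mem hz (AddSubgroup.nsmul_mem H hw z.2.val)
      have heq : z - z.2.val • w
          = (z.1 - (((z.2.val : ℤ)) : ZMod (p^m)) * w.1, (0 : ZMod p)) := by
        apply Prod.ext
        · show z.1 - z.2.val • w.1 = _
          rw [nsmul_eq_mul]; push_cast; ring
        · show z.2 - z.2.val • w.2 = 0
          rw [hw2, nsmul_eq_mul, mul_one, ZMod.natCast_val, ZMod.cast_id, sub_self]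
      rw [heq] at hmem
      rw [← hI, mem_Hcap]
      exact hmem
  · rintro ⟨k, hk, hmem⟩
    have h1 : (z.1 - (k : ZMod (p^m)) * w.1, (0:ZMod p)) ∈ H := by
      rw [← mem_Hcap, hI]; exact hmem
    have h2 : k • w ∈ H := AddSubgroup.zsmul_mem H hw k
    have heq : z = (z.1 - (k : ZMod (p^m)) * w.1, (0:ZMod p)) + k • w := by
      apply Prod.ext
      · show z.1 = z.1 - (k : ZMod (p^m)) * w.1 + k • w.1
        rw [zsmul_eq_mul]; push_cast; ring
      · show z.2 = 0 + k • w.2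
        rw [hw2, zsmul_eq_mul, mul_one, zero_add, hk]
    rw [heq]
    exact add_mem h1 h2

lemma classify [NeZero p] [NeZero (p^m)] (hp : p.Prime) (H : AddSubgroup (ZMod (p^m) × ZMod p)) :
    (∃ a ≤ m, H = Ka p m a) ∨ H = ⊤ ∨
      (∃ a, 1 ≤ a ∧ a ≤ m ∧ ∃ j < p,
        H = Wa p m a ((j : ZMod (p^m)) * (p : ZMod (p^m))^(a-1))) := by
  obtain ⟨a, ha, hIa⟩ := ideal_eq_Ia hp (Hcap H)
  by_cases h2 : ∀ z ∈ H, z.2 = (0:ZMod p)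
  · exact Or.inl ⟨a, ha, eq_Ka H a hIa h2⟩
  push_neg at h2
  obtain ⟨z, hz, hz2⟩ := h2
  haveI : Fact p.Prime := ⟨hp⟩
  set c := (z.2)⁻¹.val with hc
  have hw : c • z ∈ H := AddSubgroup.nsmul_mem H hz c
  have hw2 : (c • z).2 = 1 := by
    show c • z.2 = 1
    rw [nsmul_eq_mul, hc, ZMod.natCast_val, ZMod.cast_id]
    exact inv_mul_cancel₀ hz2
  have hH : H = Wa p m a (c • z).1 := eq_Wa H a hIa _ hw hw2
  rcases Nat.eq_zero_or_pos a with rfl | hapos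
  · right; left
    rw [hH]; exact Wa_zero_eq_top _
  · right; right
    refine ⟨a, hapos, ha, ?_⟩
    set t := (c • z).1 with hct
    -- p * t ∈ Ia a
    have hpz : p • (c • z) ∈ H := AddSubgroup.nsmul_mem H hw p
    have hpz2 : (p • (c • z)).2 = 0 := by
      show p • (c • z).2 = 0
      rw [hw2, nsmul_eq_mul, mul_one, ZMod.natCast_self]
    have hpz1 : (p • (c • z)).1 = (p : ZMod (p^m)) * t := by
      show p • (c • z).1 = _
      rw [nsmul_eq_mul, hct]
    have hpt : (p : ZMod (p^m)) * t ∈ Ia p m a := by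
      rw [← hIa, mem_Hcap]
      have : ((p : ZMod (p^m)) * t, (0:ZMod p)) = p • (c • z) := by
        apply Prod.ext
        · exact hpz1.symm
        · exact hpz2.symm
      rw [this]; exact hpz
    obtain ⟨T, hT⟩ := ZMod.intCast_surjective (n := p^m) t
    have hTdvd : (p:ℤ)^a ∣ p * T := by
      rw [← mem_Ia_iff hp ha]
      have : (((p * T : ℤ)) : ZMod (p^m)) = (p : ZMod (p^m)) * t := by
        rw [← hT]; push_cast; ring
      rw [this]; exact hpt
    obtain ⟨s, hs⟩ := hTdvd
    have hpa : (p:ℤ)^a = p * (p:ℤ)^(a-1) := by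
      rw [← pow_succ']
      congr 1
      omega
    have hTs : T = (p:ℤ)^(a-1) * s := by
      have hp0 : (p:ℤ) ≠ 0 := by
        exact_mod_cast hp.pos.ne'
      apply mul_left_cancel₀ hp0
      rw [hs, hpa]; ring
    set j : ℕ := (s % p).toNat with hj
    have hppos : (0:ℤ) < p := by exact_mod_cast hp.pos
    have hjeq : (j : ℤ) = s % p := Int.toNat_of_nonneg (Int.emod_nonneg s hppos.ne')
    have hjlt : j < p := by
      have := Int.emod_lt_of_pos s hppos
      omega
    refine ⟨j, hjlt, ?_⟩
    rw [hH]
    apply Wa_congr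
    have hint : t - (j : ZMod (p^m)) * (p : ZMod (p^m))^(a-1)
        = (((T - j * p^(a-1) : ℤ)) : ZMod (p^m)) := by
      rw [← hT]; push_cast; ring
    rw [hint, mem_Ia_iff hp ha]
    have hdiv : p * (s / p) + s % p = s := Int.mul_ediv_add_emod s p
    have h5 : s - s % (p:ℤ) = p * (s / p) := by linarith [hdiv]
    have : T - (j:ℤ) * p^(a-1) = (p:ℤ)^a * (s / p) := by
      calc T - (j:ℤ) * p^(a-1) = (p:ℤ)^(a-1) * (s - s % p) := by rw [hTs, hjeq]; ring
        _ = (p:ℤ)^(a-1) * ((p:ℤ) * (s/p)) := by rw [h5]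
        _ = (p:ℤ)^a * (s/p) := by rw [hpa]; ring
    rw [this]
    exact Dvd.intro _ rfl

lemma mem_Wa_self (a : ℕ) (t : ZMod (p^m)) : (t, (1 : ZMod p)) ∈ Wa p m a t :=
  ⟨1, by simp, by simp⟩

lemma Ka_snd {a : ℕ} {z : ZMod (p^m) × ZMod p} (hz : z ∈ Ka p m a) : z.2 = 0 := by
  simpa using (AddSubgroup.mem_prod.mp hz).2

lemma Ka_ne_Wa (hp : p.Prime) (a b : ℕ) (t : ZMod (p^m)) : Ka p m a ≠ Wa p m b t := by
  haveI : Fact p.Prime := ⟨hp⟩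
  intro h
  have h1 : (t, (1:ZMod p)) ∈ Ka p m a := h ▸ mem_Wa_self b t
  exact one_ne_zero (Ka_snd h1)

lemma Ka_ne_top (hp : p.Prime) (a : ℕ) : Ka p m a ≠ (⊤ : AddSubgroup (ZMod (p^m) × ZMod p)) := by
  haveI : Fact p.Prime := ⟨hp⟩
  intro h
  have h1 : ((0 : ZMod (p^m)), (1:ZMod p)) ∈ Ka p m a := h ▸ AddSubgroup.mem_top _
  exact one_ne_zero (Ka_snd h1)

lemma Ka_inj [NeZero (p^m)] (hp : p.Prime) {a b : ℕ} (ha : a ≤ m) (hb : b ≤ m)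
    (h : Ka p m a = Ka p m b) : a = b := by
  apply Ia_inj hp ha hb
  rw [← Hcap_Ka (p := p) (m := m) a, ← Hcap_Ka (p := p) (m := m) b, h]

lemma pt_mem (hp : p.Prime) {a : ℕ} (ha1 : 1 ≤ a) (j : ℕ) :
    (p : ZMod (p^m)) * ((j : ZMod (p^m)) * (p : ZMod (p^m))^(a-1)) ∈ Ia p m a := by
  have heq : (p : ZMod (p^m)) * ((j : ZMod (p^m)) * (p : ZMod (p^m))^(a-1))
      = (j : ZMod (p^m)) * (p : ZMod (p^m))^a := by
    have h2 : (p : ZMod (p^m))^a = (p : ZMod (p^m))^(a-1) * p := by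
      rw [← pow_succ]
      congr 1
      omega
    rw [h2]
    ring
  rw [heq]
  exact Ideal.mul_mem_left _ _ (Ideal.subset_span rfl)

lemma Wa_ne_top [NeZero p] [NeZero (p^m)] (hp : p.Prime) {a : ℕ} (ha1 : 1 ≤ a) (ha : a ≤ m)
    (j : ℕ) : Wa p m a ((j : ZMod (p^m)) * (p : ZMod (p^m))^(a-1))
      ≠ (⊤ : AddSubgroup (ZMod (p^m) × ZMod p)) := by
  intro h
  have h1 : Ia p m a = Ia p m 0 := by
    rw [← Hcap_Wa a _ (pt_mem hp ha1 j), h, Hcap_top, Ia_zero]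
  have := Ia_inj hp ha (Nat.zero_le m) h1
  omega

lemma Wa_inj [NeZero p] [NeZero (p^m)] (hp : p.Prime) {a b j j' : ℕ}
    (ha1 : 1 ≤ a) (ha : a ≤ m) (hb1 : 1 ≤ b) (hb : b ≤ m) (hj : j < p) (hj' : j' < p)
    (h : Wa p m a ((j : ZMod (p^m)) * (p : ZMod (p^m))^(a-1))
       = Wa p m b ((j' : ZMod (p^m)) * (p : ZMod (p^m))^(b-1))) : a = b ∧ j = j' := by
  have hab : a = b := by
    apply Ia_inj hp ha hb
    rw [← Hcap_Wa a _ (pt_mem hp ha1 j), ← Hcap_Wa b _ (pt_mem hp hb1 j'), h]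
  subst hab
  refine ⟨rfl, ?_⟩
  have h1 : ((j : ZMod (p^m)) * (p : ZMod (p^m))^(a-1), (1:ZMod p))
      ∈ Wa p m a ((j' : ZMod (p^m)) * (p : ZMod (p^m))^(a-1)) := h ▸ mem_Wa_self a _
  obtain ⟨k, hk, hmem⟩ := h1
  replace hk : (1 : ZMod p) = (k : ZMod p) := hk
  have hpk : (p:ℤ) ∣ k - 1 := by
    rw [← ZMod.intCast_zmod_eq_zero_iff_dvd]
    push_cast
    rw [← hk]
    ring
  have hint : (j : ZMod (p^m)) * (p : ZMod (p^m))^(a-1)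
      - (k : ZMod (p^m)) * ((j' : ZMod (p^m)) * (p : ZMod (p^m))^(a-1))
      = ((((j : ℤ) - k * j') * p^(a-1) : ℤ) : ZMod (p^m)) := by
    push_cast; ring
  rw [hint, mem_Ia_iff hp ha] at hmem
  have hpa : (p:ℤ)^a = (p:ℤ)^(a-1) * p := by
    rw [← pow_succ]
    congr 1
    omega
  obtain ⟨s, hs⟩ := hmem
  have hpane : ((p:ℤ))^(a-1) ≠ 0 := pow_ne_zero _ (by exact_mod_cast hp.pos.ne')
  have hcanc : (j : ℤ) - k * j' = p * s := by
    have h2 : ((j : ℤ) - k * j') * p^(a-1) = (p:ℤ)^(a-1) * (p * s) := by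
      rw [hs, hpa]; ring
    have h3 : (p:ℤ)^(a-1) * ((j:ℤ) - k * j') = (p:ℤ)^(a-1) * (p * s) := by
      rw [← h2]; ring
    exact mul_left_cancel₀ hpane h3
  obtain ⟨q, hq⟩ := hpk
  have hdvd : (p:ℤ) ∣ (j : ℤ) - j' := by
    refine ⟨s + q * j', ?_⟩
    have : (k : ℤ) = 1 + p * q := by omega
    rw [this] at hcanc
    nlinarith [hcanc]
  have habs : |(j:ℤ) - j'| < p := by
    rw [abs_lt]
    constructor <;> [omega; omega]
  have := Int.eq_zero_of_abs_lt_dvd hdvd habs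
  omega

theorem addsubgroup_count (hp : p.Prime) (hm : 1 ≤ m) :
    Nat.card (AddSubgroup (ZMod (p^m) × ZMod p)) = (p+1)*m + 2 := by
  haveI : NeZero p := ⟨hp.pos.ne'⟩
  haveI : NeZero (p^m) := ⟨pow_ne_zero m hp.pos.ne'⟩
  classical
  set f2 : ℕ × ℕ → AddSubgroup (ZMod (p^m) × ZMod p) :=
    fun q => Wa p m q.1 ((q.2 : ZMod (p^m)) * (p : ZMod (p^m))^(q.1-1)) with hf2
  set img1 : Finset (AddSubgroup (ZMod (p^m) × ZMod p)) :=
    (Finset.range (m+1)).image (Ka p m) with himg1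
  set img2 : Finset (AddSubgroup (ZMod (p^m) × ZMod p)) :=
    (Finset.Ico 1 (m+1) ×ˢ Finset.range p).image f2 with himg2
  set S : Finset (AddSubgroup (ZMod (p^m) × ZMod p)) := img1 ∪ img2 ∪ {⊤} with hS
  have hcomplete : ∀ H : AddSubgroup (ZMod (p^m) × ZMod p), H ∈ S := by
    intro H
    rcases classify hp H with ⟨a, ha, rfl⟩ | rfl | ⟨a, ha1, ha, j, hj, rfl⟩
    · apply Finset.mem_union_left; apply Finset.mem_union_left
      exact Finset.mem_image.mpr ⟨a, Finset.mem_range.mpr (by omega), rfl⟩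
    · exact Finset.mem_union_right _ (Finset.mem_singleton_self _)
    · apply Finset.mem_union_left; apply Finset.mem_union_right
      exact Finset.mem_image.mpr ⟨(a, j), Finset.mem_product.mpr
        ⟨Finset.mem_Ico.mpr ⟨ha1, by omega⟩, Finset.mem_range.mpr hj⟩, rfl⟩
  have c1 : img1.card = m + 1 := by
    rw [himg1, Finset.card_image_of_injOn, Finset.card_range]
    intro a haa b hbb hab
    simp only [Finset.coe_range, Set.mem_Iio] at haa hbb
    exact Ka_inj hp (by omega) (by omega) hab
  have c2 : img2.card = m * p := by
    rw [himg2, Finset.card_image_of_injOn]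
    · rw [Finset.card_product, Nat.card_Ico, Finset.card_range]
      congr 1
    · rintro ⟨a, j⟩ hq ⟨b, j'⟩ hq' heq
      simp only [Finset.coe_product, Set.mem_prod, Finset.mem_coe, Finset.mem_Ico,
        Finset.mem_range] at hq hq'
      obtain ⟨h1, h2⟩ := Wa_inj hp hq.1.1 (by omega) hq'.1.1 (by omega) hq.2 hq'.2 heq
      exact Prod.ext h1 h2
  have d12 : Disjoint img1 img2 := by
    rw [Finset.disjoint_left]
    rintro x hx1 hx2
    rw [himg1, Finset.mem_image] at hx1
    rw [himg2, Finset.mem_image] at hx2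
    obtain ⟨a, _, rfl⟩ := hx1
    obtain ⟨q, _, hq⟩ := hx2
    exact Ka_ne_Wa hp a q.1 _ hq.symm
  have d3 : Disjoint (img1 ∪ img2) ({⊤} : Finset (AddSubgroup (ZMod (p^m) × ZMod p))) := by
    rw [Finset.disjoint_right]
    intro x hx hx'
    rw [Finset.mem_singleton] at hx
    subst hx
    rcases Finset.mem_union.mp hx' with h | h
    · rw [himg1, Finset.mem_image] at h
      obtain ⟨a, _, ha⟩ := h
      exact Ka_ne_top hp a ha
    · rw [himg2, Finset.mem_image] at h
      obtain ⟨q, hqmem, hq⟩ := h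
      rw [Finset.mem_product, Finset.mem_Ico] at hqmem
      exact Wa_ne_top hp hqmem.1.1 (by omega) q.2 hq
  have hcard : S.card = (p+1)*m + 2 := by
    rw [hS, Finset.card_union_of_disjoint d3, Finset.card_union_of_disjoint d12,
      c1, c2, Finset.card_singleton]
    ring
  have huniv : (↑S : Set (AddSubgroup (ZMod (p^m) × ZMod p))) = Set.univ :=
    Set.eq_univ_of_forall hcomplete
  rw [← hcard, ← Set.ncard_coe_finset, huniv, Set.ncard_univ]

end SubCount

theorem subgroup_count_cyclic_times_Cp
    (p lam : ℕ) (hp : p.Prime) (hlam : 2 ≤ lam) :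
    Nat.card (Subgroup (Multiplicative (ZMod (p ^ (lam - 1)) × ZMod p))) =
      (p + 1) * (lam - 1) + 2 := by
  have hm : 1 ≤ lam - 1 := by omega
  have h1 : Nat.card (Subgroup (Multiplicative (ZMod (p ^ (lam - 1)) × ZMod p)))
      = Nat.card (AddSubgroup (ZMod (p ^ (lam - 1)) × ZMod p)) :=
    Nat.card_congr AddSubgroup.toSubgroup.toEquiv.symm
  rw [h1, SubCount.addsubgroup_count hp hm]
end

section
/- For a prime p and λ ≥ 3, the modular group M_{p^λ} = ⟨a, b | a^{p^{λ−1}} = b^p = 1, a^b = a^{1+p^{λ−2}}⟩ has exactly (p+1)(λ−1)+2 subgroups. -/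
open Pointwise

open Subgroup

section Comm
variable {G : Type*} [Group G] {a b : G} {q : ℕ}

lemma MPL_pow_eq_of {M : ℕ} (hM : a ^ M = 1) {x c : ℕ} : a ^ (x + c * M) = a ^ x := by
  rw [pow_add, mul_comm c M, pow_mul, hM, one_pow, mul_one]

lemma MPL_conj_pow (hrel : b⁻¹ * a * b = a ^ (1 + q)) (s : ℕ) :
    a ^ s * b = b * a ^ (s + s * q) := by
  have h1 : b⁻¹ * a ^ s * b = (b⁻¹ * a * b) ^ s := by
    induction s with
    | zero => simp
    | succ n ih =>
      rw [pow_succ, pow_succ, ← ih]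
      group
  have h3 : b⁻¹ * a ^ s * b = a ^ (s * (1 + q)) := by
    rw [h1, hrel, ← pow_mul, mul_comm (1+q) s]
  have h2 : a ^ s * b = b * a ^ (s * (1 + q)) := by
    rw [← h3]; group
  rw [h2, mul_one_add, mul_comm s q, mul_comm q s]

lemma MPL_move_left (hrel : b⁻¹ * a * b = a ^ (1 + q)) (hq : a ^ (q * q) = 1) (T k : ℕ) :
    a ^ k * b ^ T = b ^ T * a ^ (k + k * T * q) := by
  induction T with
  | zero => simp
  | succ T ih =>
    rw [pow_succ, ← mul_assoc, ih, mul_assoc, MPL_conj_pow hrel, ← mul_assoc, ← pow_succ]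
    congr 1
    have h : (k + k * T * q) + (k + k * T * q) * q = (k + k * (T+1) * q) + (k * T) * (q * q) := by
      ring
    rw [h, MPL_pow_eq_of hq]

lemma MPL_gen_pow (hrel : b⁻¹ * a * b = a ^ (1 + q)) (hq : a ^ (q * q) = 1) (n t s : ℕ) :
    (a ^ n * b ^ t) ^ s = b ^ (t * s) * a ^ (n * s + n * t * q * Nat.choose (s+1) 2) := by
  induction s with
  | zero => simp
  | succ s ih =>
    have hch : Nat.choose (s+1+1) 2 = (s+1) + Nat.choose (s+1) 2 := by
      rw [Nat.choose_succ_succ (s+1) 1, Nat.choose_one_right]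
    have e1 : t + t * s = t * (s+1) := by ring
    have e2 : n + n * (t * (s+1)) * q + (n * s + n * t * q * Nat.choose (s+1) 2)
        = n * (s+1) + n * t * q * Nat.choose (s+1+1) 2 := by
      rw [hch]; ring
    rw [pow_succ' (a ^ n * b ^ t), ih, ← mul_assoc, mul_assoc (a ^ n), ← pow_add,
      MPL_move_left hrel hq (t + t * s) n, mul_assoc, ← pow_add, e1, e2]

lemma MPL_move_right {M : ℕ} (hrel : b⁻¹ * a * b = a ^ (1 + q)) (hq : a ^ (q * q) = 1)
    (hM : a ^ M = 1) (hqM : q ≤ M) (k : ℕ) :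
    b * a ^ k = a ^ (k * (1 + M - q)) * b := by
  rw [MPL_conj_pow hrel (k * (1 + M - q))]
  congr 1
  obtain ⟨D, hD⟩ : ∃ D, D + q = 1 + M := ⟨1 + M - q, by omega⟩
  have hDe : 1 + M - q = D := by omega
  rw [hDe]
  have key : k + (k * (1+q)) * M = (k * D + k * D * q) + k * (q * q) := by
    zify
    zify at hD
    linear_combination (-(k:ℤ) - k * q) * hD
  have h1 : a ^ (k + (k * (1+q)) * M) = a ^ k := MPL_pow_eq_of hM
  rw [key] at h1
  rw [← h1, MPL_pow_eq_of hq]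

end Comm

open Subgroup

section Mem
variable {G : Type*} [Group G] {a : G} {N d : ℕ}

lemma MPL_zpow_mem_zpowers_iff (haN : orderOf a = N) (hd : d ∣ N) (z : ℤ) :
    a ^ z ∈ zpowers (a ^ d) ↔ (d : ℤ) ∣ z := by
  constructor
  · rintro ⟨w, hw⟩
    have hw' : a ^ ((d : ℤ) * w) = a ^ z := by
      rw [zpow_mul, zpow_natCast]; exact hw
    have hmod : (d : ℤ) * w ≡ z [ZMOD (N : ℕ)] := by
      have := (zpow_eq_zpow_iff_modEq (x := a)).mp hw'
      rwa [haN] at this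
    have hdvd : (N : ℤ) ∣ z - (d : ℤ) * w := Int.ModEq.dvd hmod
    have hdN : (d : ℤ) ∣ (N : ℤ) := Int.natCast_dvd_natCast.mpr hd
    have : (d : ℤ) ∣ z - (d : ℤ) * w := dvd_trans hdN hdvd
    have := dvd_add this (Dvd.intro w rfl)
    simpa using this
  · rintro ⟨c, rfl⟩
    exact ⟨c, by simp [← zpow_natCast, ← zpow_mul]⟩

lemma MPL_pow_mem_zpowers_iff (haN : orderOf a = N) (hd : d ∣ N) (s : ℕ) :
    a ^ s ∈ zpowers (a ^ d) ↔ d ∣ s := by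
  have := MPL_zpow_mem_zpowers_iff haN hd (s : ℤ)
  rw [zpow_natCast] at this
  rw [this, Int.natCast_dvd_natCast]

/-- classification of subgroups contained in a cyclic `p`-subgroup -/
lemma MPL_subgroup_of_cyclic [Finite G] {p m : ℕ} (hp : p.Prime) (ha : orderOf a = p ^ m)
    (H : Subgroup G) (hH : H ≤ zpowers a) : ∃ j ≤ m, H = zpowers (a ^ p ^ j) := by
  have hcd : Nat.card H ∣ p ^ m := by
    have := Subgroup.card_dvd_of_le hH
    rwa [Nat.card_zpowers, ha] at this
  obtain ⟨l, hlm, hl⟩ := (Nat.dvd_prime_pow hp).mp hcd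
  refine ⟨m - l, by omega, ?_⟩
  have hj : p ^ (m - l) ∣ p ^ m := pow_dvd_pow p (by omega)
  have hord : orderOf (a ^ p ^ (m - l)) = p ^ l := by
    rw [orderOf_pow, ha, Nat.gcd_eq_right hj, Nat.pow_div (by omega) hp.pos]
    congr 1; omega
  have hle : H ≤ zpowers (a ^ p ^ (m - l)) := by
    intro x hx
    obtain ⟨z, hz⟩ := hH hx
    have hx1 : x ^ (p ^ l) = 1 := by
      rw [← hl]
      have : (⟨x, hx⟩ : H) ^ Nat.card H = 1 := pow_card_eq_one'
      exact_mod_cast congrArg (Subgroup.subtype H) this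
    rw [← hz] at hx1 ⊢
    rw [← zpow_natCast, ← zpow_mul] at hx1
    have hdvd : ((p : ℤ) ^ m) ∣ z * (p ^ l : ℕ) := by
      have h5 := orderOf_dvd_iff_zpow_eq_one.mpr hx1
      rw [ha] at h5
      exact_mod_cast h5
    have hdvd2 : ((p : ℤ) ^ (m - l)) ∣ z := by
      have hpl : ((p:ℤ) ^ l) ≠ 0 := by
        simp [hp.ne_zero]
      have : (p : ℤ) ^ m = (p:ℤ) ^ (m - l) * (p:ℤ)^l := by
        rw [← pow_add]; congr 1; omega
      rw [this] at hdvd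
      push_cast at hdvd
      obtain ⟨c, hc⟩ := hdvd
      refine ⟨c, ?_⟩
      apply mul_right_cancel₀ hpl
      rw [hc]; ring
    rw [MPL_zpow_mem_zpowers_iff ha hj]
    exact_mod_cast hdvd2
  have hcards : Nat.card (zpowers (a ^ p ^ (m - l))) ≤ Nat.card H := by
    rw [Nat.card_zpowers, hord, hl]
  exact Subgroup.eq_of_le_of_card_ge hle hcards

end Mem


open Subgroup

theorem modular_pGroup_subgroup_count
    (p lam : ℕ) (hp : p.Prime) (hlam : 3 ≤ lam) (h2 : p = 2 → 4 ≤ lam)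
    (G : Type*) [Group G] (hcard : Nat.card G = p ^ lam)
    (a b : G) (ha : orderOf a = p ^ (lam - 1)) (hb : orderOf b = p)
    (hrel : b⁻¹ * a * b = a ^ (1 + p ^ (lam - 2)))
    (hgen : Subgroup.closure {a, b} = ⊤) :
    Nat.card (Subgroup G) = (p + 1) * (lam - 1) + 2 := by
  have hp2 : 2 ≤ p := hp.two_le
  set m : ℕ := lam - 1 with hmdef
  set q : ℕ := p ^ (lam - 2) with hqdef
  have hm2 : 2 ≤ m := by omega
  have hfin : Finite G := by
    have h0 : 0 < Nat.card G := by rw [hcard]; positivity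
    exact (Nat.card_pos_iff.mp h0).2
  have hM : a ^ (p ^ m) = 1 := by rw [← ha]; exact pow_orderOf_eq_one a
  have hqq : a ^ (q * q) = 1 := by
    have he : q * q = p ^ m * p ^ (lam - 3) := by
      rw [hqdef, ← pow_add, ← pow_add]; congr 1; omega
    rw [he, pow_mul, hM, one_pow]
  have hqM : q ≤ p ^ m := Nat.pow_le_pow_right hp.pos (by omega)
  -- order of powers of a
  have hordpow : ∀ w j : ℕ, ¬ p ∣ w → j ≤ m → orderOf (a ^ (w * p ^ j)) = p ^ (m - j) := by
    intro w j hw hj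
    rw [orderOf_pow, ha]
    have h1 : p ^ m = p ^ j * p ^ (m - j) := by rw [← pow_add]; congr 1; omega
    have hco : Nat.Coprime (p ^ (m - j)) w :=
      Nat.Coprime.pow_left _ ((hp.coprime_iff_not_dvd.mpr hw))
    have hg : Nat.gcd (p ^ m) (w * p ^ j) = p ^ j := by
      rw [h1, mul_comm w (p ^ j), Nat.gcd_mul_left, hco.gcd_eq_one, mul_one]
    rw [hg, h1, Nat.mul_div_cancel_left _ (by positivity)]
  -- normality of cyclic subgroups over a
  have hconj : ∀ (g x : G) (z : ℤ), g * x ^ z * g⁻¹ = (g * x * g⁻¹) ^ z := by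
    intro g x z
    have := map_zpow (MulAut.conj g) x z
    simpa [MulAut.conj_apply] using this
  have hnormal : ∀ k : ℕ, (zpowers (a ^ k)).Normal := by
    intro k
    apply Subgroup.normalizer_eq_top_iff.mp
    rw [eq_top_iff, ← hgen, Subgroup.closure_le]
    rintro x hx
    simp only [Set.mem_insert_iff, Set.mem_singleton_iff] at hx
    have hconjb : b * a ^ k * b⁻¹ = (a ^ k) ^ (1 + p ^ m - q) := by
      have h := MPL_move_right hrel hqq hM hqM k
      have h2 : b * a ^ k * b⁻¹ = a ^ (k * (1 + p ^ m - q)) := by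
        rw [h]; group
      rw [h2, pow_mul]
    have hconjb' : b⁻¹ * a ^ k * b = (a ^ k) ^ (1 + q) := by
      have h := MPL_conj_pow hrel k
      have h2 : b⁻¹ * a ^ k * b = a ^ (k + k * q) := by
        rw [mul_assoc, h]; group
      rw [h2, ← pow_mul, Nat.mul_add, Nat.mul_one]
    rcases hx with rfl | rfl
    · rw [SetLike.mem_coe, Subgroup.mem_normalizer_iff]
      intro h
      have hc : ∀ z : ℤ, Commute x ((x ^ k) ^ z) := fun z =>
        (Commute.refl x).pow_right k |>.zpow_right z
      constructor
      · rintro ⟨z, rfl⟩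
        refine ⟨z, ?_⟩
        show (x ^ k) ^ z = x * (x ^ k) ^ z * x⁻¹
        rw [(hc z).eq]; group
      · rintro ⟨z, hz⟩
        have hz' : (x ^ k) ^ z = x * h * x⁻¹ := hz
        have h1 : h = x⁻¹ * (x ^ k) ^ z * x := by rw [hz']; group
        have hc2 : Commute x⁻¹ ((x ^ k) ^ z) := (hc z).inv_left
        rw [hc2.eq] at h1
        exact ⟨z, by rw [h1]; group⟩
    · rw [SetLike.mem_coe, Subgroup.mem_normalizer_iff]
      intro h
      constructor
      · rintro ⟨z, rfl⟩
        refine ⟨(((1 + p ^ m - q) : ℕ) : ℤ) * z, ?_⟩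
        show (a ^ k) ^ ((((1 + p ^ m - q) : ℕ) : ℤ) * z) = x * (a ^ k) ^ z * x⁻¹
        rw [hconj, hconjb, ← zpow_natCast (a ^ k) (1 + p ^ m - q), ← zpow_mul]
      · rintro ⟨z, hz⟩
        have hz' : (a ^ k) ^ z = x * h * x⁻¹ := hz
        have h1 : h = x⁻¹ * (a ^ k) ^ z * x := by rw [hz']; group
        have h3 := hconj x⁻¹ (a ^ k) z
        rw [inv_inv] at h3
        rw [h3, hconjb', ← zpow_natCast (a ^ k) (1 + q), ← zpow_mul] at h1
        exact ⟨((1 + q : ℕ) : ℤ) * z, h1.symm⟩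
  have hAnormal : (zpowers a).Normal := by
    have h := hnormal 1; rwa [pow_one] at h
  have hcardA : Nat.card (zpowers a) = p ^ m := by rw [Nat.card_zpowers, ha]
  have hbA : b ∉ zpowers a := by
    intro hmem
    have htop : (⊤ : Subgroup G) ≤ zpowers a := by
      rw [← hgen, Subgroup.closure_le]
      rintro x hx
      simp only [Set.mem_insert_iff, Set.mem_singleton_iff] at hx
      rcases hx with rfl | rfl
      · exact mem_zpowers x
      · exact hmem
    have hAt : zpowers a = ⊤ := top_le_iff.mp htop
    have : p ^ m = p ^ lam := by
      rw [← hcardA, hAt, Subgroup.card_top, hcard]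
    have := Nat.pow_right_injective hp2 this
    omega
  -- quotient facts
  let π : G →* G ⧸ zpowers a := QuotientGroup.mk' (zpowers a)
  have hker : ∀ g : G, π g = 1 ↔ g ∈ zpowers a := fun g => QuotientGroup.eq_one_iff g
  haveI := hAnormal
  have hidxA : (zpowers a).index = p := by
    have h1 := Subgroup.card_mul_index (zpowers a)
    rw [hcardA, hcard] at h1
    have h2 : p ^ lam = p ^ m * p := by rw [← pow_succ]; congr 1; omega
    rw [h2] at h1
    exact Nat.eq_of_mul_eq_mul_left (by positivity) h1
  have hcardQ : Nat.card (G ⧸ zpowers a) = p := by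
    have h1 := Subgroup.card_eq_card_quotient_mul_card_subgroup (zpowers a)
    rw [hcard, hcardA] at h1
    have h2 : p ^ lam = p * p ^ m := by rw [← pow_succ']; congr 1; omega
    rw [h2] at h1
    exact (Nat.eq_of_mul_eq_mul_right (by positivity) h1.symm)
  have hπtop : zpowers (π b) = ⊤ := by
    have hmap : Subgroup.map π ⊤ = ⊤ :=
      Subgroup.map_top_of_surjective _ (QuotientGroup.mk'_surjective _)
    rw [← hgen, MonoidHom.map_closure] at hmap
    have himg : π '' {a, b} = {π a, π b} := Set.image_pair _ a b
    have hπa : π a = 1 := (hker a).mpr (mem_zpowers a)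
    rw [himg, hπa, Set.insert_eq, Subgroup.closure_union, Subgroup.closure_singleton_one,
      bot_sup_eq, ← Subgroup.zpowers_eq_closure] at hmap
    exact hmap
  have hordπb : orderOf (π b) = p := by
    rw [← Nat.card_zpowers, hπtop, Subgroup.card_top, hcardQ]
  have hπbp : (π b) ^ p = 1 := by rw [← hordπb]; exact pow_orderOf_eq_one _
  have hdec : ∀ g : G, ∃ s : ℕ, s < p ∧ π g = (π b) ^ s := by
    intro g
    have hg : π g ∈ zpowers (π b) := by rw [hπtop]; trivial
    obtain ⟨z, hz⟩ := hg
    have h0 : (0 : ℤ) < p := by exact_mod_cast hp.pos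
    have hnn := Int.emod_nonneg z (by omega : (p:ℤ) ≠ 0)
    have hlt := Int.emod_lt_of_pos z h0
    refine ⟨(z % p).toNat, by omega, ?_⟩
    have e1 : (((z % (p:ℤ)).toNat : ℕ) : ℤ) = z % p := Int.toNat_of_nonneg hnn
    have key : (π b) ^ ((z % (p:ℤ)).toNat) = (π b) ^ z := by
      rw [← zpow_natCast (π b), e1]
      conv_rhs => rw [← Int.emod_add_mul_ediv z p]
      rw [zpow_add, zpow_mul, zpow_natCast, hπbp, one_zpow, mul_one]
    have hz' : (π b) ^ z = π g := hz
    rw [← hz']; exact key.symm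
  have hbzA : ∀ z : ℤ, b ^ z ∈ zpowers a → b ^ z = 1 := by
    intro z hmem
    have h1 : π (b ^ z) = 1 := (hker _).mpr hmem
    have h2 : (π b) ^ z = 1 := by rw [← map_zpow]; exact h1
    have h3 : ((p : ℕ) : ℤ) ∣ z := by
      rw [← hordπb]; exact orderOf_dvd_iff_zpow_eq_one.mpr h2
    obtain ⟨c, rfl⟩ := h3
    rw [zpow_mul, zpow_natCast]
    have : b ^ p = 1 := by rw [← hb]; exact pow_orderOf_eq_one b
    rw [this, one_zpow]
  -- p-th power formula
  have hpowp : ∀ n t : ℕ, ∃ u : ℕ, ¬ p ∣ u ∧ (a ^ n * b ^ t) ^ p = a ^ (n * p * u) := by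
    intro n t
    have h := MPL_gen_pow hrel hqq n t p
    have hb0 : b ^ (t * p) = 1 := by
      rw [mul_comm t p, pow_mul, ← hb, pow_orderOf_eq_one, one_pow]
    rw [hb0, one_mul] at h
    by_cases hpe : p = 2
    · subst hpe
      have hl4 : 4 ≤ lam := h2 rfl
      refine ⟨1 + 3 * t * 2 ^ (lam - 3), ?_, ?_⟩
      · obtain ⟨e, he⟩ : ∃ e, 2 ^ (lam - 3) = 2 * e :=
          ⟨2 ^ (lam - 4), by rw [← pow_succ']; congr 1; omega⟩
        have h3 : 1 + 3 * t * 2 ^ (lam - 3) = 2 * (3 * t * e) + 1 := by rw [he]; ring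
        rw [h3]; omega
      · rw [h]
        have hC : Nat.choose (2 + 1) 2 = 3 := by decide
        have hq2 : q = 2 * 2 ^ (lam - 3) := by
          rw [hqdef, ← pow_succ']; congr 1; omega
        have hexp : n * 2 + n * t * q * Nat.choose (2+1) 2
            = n * 2 * (1 + 3 * t * 2 ^ (lam - 3)) := by
          rw [hC, hq2]; ring
        rw [hexp]
    · refine ⟨1, hp.not_dvd_one, ?_⟩
      · rw [h]
        obtain ⟨k, hk⟩ := hp.odd_of_ne_two hpe
        have hC : Nat.choose (p + 1) 2 = (k + 1) * p := by
          rw [Nat.choose_two_right]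
          have hs1 : p + 1 - 1 = p := by omega
          have h1 : (p + 1) * (p + 1 - 1) = 2 * ((k + 1) * p) := by
            rw [hs1, hk]; ring
          omega
        have hqp : q * p = p ^ m := by
          rw [hqdef, ← pow_succ]; congr 1; omega
        have hexp : n * p + n * t * q * Nat.choose (p+1) 2
            = n * p * 1 + (n * t * (k + 1)) * p ^ m := by
          rw [hC, ← hqp]; ring
        rw [hexp, MPL_pow_eq_of hM]
  -- order of mixed generators
  have hmixA : ∀ n : ℕ, a ^ n * b ^ 1 ∉ zpowers a := by
    intro n hmem
    apply hbA
    have h1 : b = (a ^ n)⁻¹ * (a ^ n * b ^ 1) := by group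
    rw [h1]
    exact Subgroup.mul_mem _ (Subgroup.inv_mem _ (Subgroup.pow_mem _ (mem_zpowers a) n)) hmem
  have hordmix : ∀ w j : ℕ, ¬ p ∣ w → j + 1 ≤ m → orderOf (a ^ (w * p ^ j) * b ^ 1) = p ^ (m - j) := by
    intro w j hw hj1
    obtain ⟨u, hu, hxp⟩ := hpowp (w * p ^ j) 1
    set x := a ^ (w * p ^ j) * b ^ 1 with hxdef
    have hwu : ¬ p ∣ w * u := fun hd => by
      rcases (hp.dvd_mul).mp hd with h | h
      · exact hw h
      · exact hu h
    have hordxp : orderOf (x ^ p) = p ^ (m - j - 1) := by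
      rw [hxp]
      have he : w * p ^ j * p * u = (w * u) * p ^ (j + 1) := by
        rw [pow_succ]; ring
      rw [he, hordpow (w * u) (j + 1) hwu (by omega)]
      congr 1
    have h1 : x ^ (p ^ (m - j)) = 1 := by
      have he : p ^ (m - j) = p * p ^ (m - j - 1) := by
        rw [← pow_succ']; congr 1; omega
      rw [he, pow_mul, ← hordxp, pow_orderOf_eq_one]
    obtain ⟨i, hi, hie⟩ := (Nat.dvd_prime_pow hp).mp (orderOf_dvd_of_pow_eq_one h1)
    have hx1 : x ≠ 1 := fun h => hmixA _ (h ▸ (zpowers a).one_mem)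
    have hi1 : 1 ≤ i := by
      rcases Nat.eq_zero_or_pos i with h0 | h0
      · exfalso
        apply hx1
        rw [← orderOf_eq_one_iff, hie, h0, pow_zero]
      · exact h0
    have h3 : orderOf (x ^ p) = p ^ (i - 1) := by
      rw [orderOf_pow, hie]
      have hgcd : Nat.gcd (p ^ i) p = p := Nat.gcd_eq_right (dvd_pow_self p (by omega))
      rw [hgcd]
      have he : p ^ i = p ^ (i - 1) * p := by rw [← pow_succ]; congr 1; omega
      rw [he, Nat.mul_div_cancel _ hp.pos]
    rw [hordxp] at h3
    have := Nat.pow_right_injective hp2 h3.symm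
    rw [hie]
    congr 1
    omega
  -- mixed elements are not in A
  -- intersection of zpowers of a mixed element with A
  have hint : ∀ x : G, π x = π b → ∀ g : G, g ∈ zpowers x → g ∈ zpowers a →
      g ∈ zpowers (x ^ p) := by
    intro x hx g hgx hgA
    obtain ⟨z, hz⟩ := hgx
    have hz' : x ^ z = g := hz
    have h1 : π g = 1 := (hker g).mpr hgA
    have h2 : (π b) ^ z = 1 := by
      rw [← hx, ← map_zpow, hz', h1]
    have h3 : ((p : ℕ) : ℤ) ∣ z := by
      rw [← hordπb]; exact orderOf_dvd_iff_zpow_eq_one.mpr h2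
    obtain ⟨c, rfl⟩ := h3
    refine ⟨c, ?_⟩
    show ((x ^ p) ^ c : G) = g
    rw [← hz', ← zpow_natCast x p, ← zpow_mul]
  -- reconstruction of subgroups
  have hrecon : ∀ (H : Subgroup G) (x : G), x ∈ H → π x = π b →
      H = (H ⊓ zpowers a) ⊔ zpowers x := by
    intro H x hxH hπx
    apply le_antisymm
    · intro g hg
      obtain ⟨s, hs, hπg⟩ := hdec g
      have hgx : g * (x ^ s)⁻¹ ∈ H ⊓ zpowers a := by
        constructor
        · exact Subgroup.mul_mem _ hg (Subgroup.inv_mem _ (Subgroup.pow_mem _ hxH s))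
        · apply (hker _).mp
          rw [map_mul, map_inv, map_pow, hπx, hπg, mul_inv_cancel]
      have he : g = (g * (x ^ s)⁻¹) * x ^ s := by group
      rw [he]
      exact Subgroup.mul_mem _ ((le_sup_left : H ⊓ zpowers a ≤ _) hgx)
        ((le_sup_right : zpowers x ≤ _) (Subgroup.pow_mem _ (mem_zpowers x) s))
    · exact sup_le inf_le_left (Subgroup.zpowers_le.mpr hxH)
  -- cardinality of non-contained subgroups
  have hcardH : ∀ H : Subgroup G, ¬ H ≤ zpowers a →
      Nat.card H = p * Nat.card ↥(H ⊓ zpowers a) := by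
    intro H hH
    have hdvd := Subgroup.relIndex_dvd_index_of_normal (H := zpowers a) (K := H)
    rw [hidxA] at hdvd
    rcases (Nat.Prime.eq_one_or_self_of_dvd hp _ hdvd) with h1 | hpe
    · exact absurd (Subgroup.relIndex_eq_one.mp h1) hH
    · have hcm := Subgroup.card_mul_index ((zpowers a).subgroupOf H)
      have he1 : (zpowers a).subgroupOf H = ((zpowers a) ⊓ H).subgroupOf H :=
        (Subgroup.inf_subgroupOf_right _ _).symm
      have he2 : Nat.card ↥(((zpowers a) ⊓ H).subgroupOf H) = Nat.card ↥((zpowers a) ⊓ H) :=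
        Nat.card_congr (Subgroup.subgroupOfEquivOfLe inf_le_right).toEquiv
      have he3 : H ⊓ zpowers a = zpowers a ⊓ H := inf_comm _ _
      rw [he3, ← he2, ← he1]
      have : ((zpowers a).subgroupOf H).index = p := hpe
      rw [this] at hcm
      rw [← hcm, mul_comm]
  -- K-type subgroups: intersection and card
  have hKint : ∀ j : ℕ, 1 ≤ j → j ≤ m →
      (zpowers (a ^ p ^ j) ⊔ zpowers b) ⊓ zpowers a = zpowers (a ^ p ^ j) := by
    intro j hj1 hjm
    apply le_antisymm
    · intro g hg
      obtain ⟨hgK, hgA⟩ := hg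
      haveI := hnormal (p ^ j)
      rw [sup_comm] at hgK
      have hset : (g : G) ∈ (zpowers b : Set G) * (zpowers (a ^ p ^ j) : Set G) := by
        rw [← Subgroup.mul_normal (zpowers b) (zpowers (a ^ p ^ j))]
        exact_mod_cast hgK
      obtain ⟨y, hy, n, hn, rfl⟩ := hset
      obtain ⟨z, hz⟩ := hy
      have hz' : b ^ z = y := hz
      have hnA : n ∈ zpowers a := by
        obtain ⟨c, hc⟩ := hn
        have hc' : (a ^ p ^ j) ^ c = n := hc
        rw [← hc', ← zpow_natCast a (p ^ j), ← zpow_mul]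
        exact zpow_mem (mem_zpowers a) _
      have hyA : y ∈ zpowers a := by
        have : y = (y * n) * n⁻¹ := by group
        rw [this]
        exact Subgroup.mul_mem _ hgA (Subgroup.inv_mem _ hnA)
      have hy1 : y = 1 := by rw [← hz']; exact hbzA z (hz' ▸ hyA)
      simpa [hy1] using hn
    · exact le_inf le_sup_left
        (Subgroup.zpowers_le.mpr (Subgroup.pow_mem _ (mem_zpowers a) _))
  have hKcard : ∀ j : ℕ, 1 ≤ j → j ≤ m →
      Nat.card ↥(zpowers (a ^ p ^ j) ⊔ zpowers b) = p ^ (m - j + 1) := by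
    intro j hj1 hjm
    have hK : ¬ (zpowers (a ^ p ^ j) ⊔ zpowers b) ≤ zpowers a := fun hle =>
      hbA (hle ((le_sup_right : zpowers b ≤ _) (mem_zpowers b)))
    rw [hcardH _ hK, hKint j hj1 hjm, Nat.card_zpowers]
    have h1 : a ^ p ^ j = a ^ (1 * p ^ j) := by rw [one_mul]
    rw [h1, hordpow 1 j (by simpa using hp.one_lt.ne') hjm, ← pow_succ']
  -- the enumeration
  let Φ : Fin m × Fin (p+1) ⊕ Fin 2 → Subgroup G := fun z =>
    Sum.elim (fun kw =>
      if (kw.2 : ℕ) = 0 then zpowers (a ^ p ^ (m - (kw.1 : ℕ) - 1))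
      else if (kw.2 : ℕ) = p then zpowers (a ^ p ^ (m - (kw.1 : ℕ))) ⊔ zpowers b
      else zpowers (a ^ ((kw.2 : ℕ) * p ^ (m - (kw.1 : ℕ) - 1)) * b ^ 1)) 
      (fun i => if i = 0 then ⊥ else ⊤) z
  -- cards of listed subgroups
  have hΦcard : ∀ (k : Fin m) (w : Fin (p+1)),
      Nat.card ↥(Φ (Sum.inl (k, w))) = p ^ ((k : ℕ) + 1) := by
    intro k w
    have hkm : (k : ℕ) < m := k.isLt
    simp only [Φ, Sum.elim_inl]
    by_cases h0 : (w : ℕ) = 0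
    · rw [if_pos h0, Nat.card_zpowers]
      have h1 : a ^ p ^ (m - (k : ℕ) - 1) = a ^ (1 * p ^ (m - (k : ℕ) - 1)) := by rw [one_mul]
      rw [h1, hordpow 1 (m - (k : ℕ) - 1) (by simpa using hp.one_lt.ne') (by omega)]
      congr 1
      omega
    · rw [if_neg h0]
      by_cases hpw : (w : ℕ) = p
      · rw [if_pos hpw, hKcard (m - (k : ℕ)) (by omega) (by omega)]
        congr 1
        omega
      · rw [if_neg hpw, Nat.card_zpowers]
        have hwp : (w : ℕ) < p := by
          have := w.isLt
          omega
        have hwd : ¬ p ∣ (w : ℕ) := Nat.not_dvd_of_pos_of_lt (by omega) hwp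
        rw [hordmix (w : ℕ) (m - (k : ℕ) - 1) hwd (by omega)]
        congr 1
        omega
  have hΦ0 : Φ (Sum.inr 0) = ⊥ := by simp [Φ]
  have hΦ1 : Φ (Sum.inr 1) = ⊤ := by simp [Φ]
  have hbB : ∀ (w j : ℕ), 0 < w → w < p → j + 1 ≤ m →
      b ∉ zpowers (a ^ (w * p ^ j) * b ^ 1) := by
    intro w j hw0 hwp hj hmem
    have hwd : ¬ p ∣ w := Nat.not_dvd_of_pos_of_lt hw0 hwp
    set y := a ^ (w * p ^ j) * b ^ 1 with hy
    have haB : a ^ (w * p ^ j) ∈ zpowers y := by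
      have he : a ^ (w * p ^ j) = y * b⁻¹ := by rw [hy]; group
      rw [he]
      exact Subgroup.mul_mem _ (mem_zpowers y) (Subgroup.inv_mem _ hmem)
    have h1 : zpowers (a ^ (w * p ^ j)) ≤ zpowers y := Subgroup.zpowers_le.mpr haB
    have hcy : Nat.card (zpowers y) = p ^ (m - j) := by
      rw [Nat.card_zpowers]; exact hordmix w j hwd hj
    have hca : Nat.card (zpowers (a ^ (w * p ^ j))) = p ^ (m - j) := by
      rw [Nat.card_zpowers]; exact hordpow w j hwd (by omega)
    have h2 : zpowers (a ^ (w * p ^ j)) = zpowers y :=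
      Subgroup.eq_of_le_of_card_ge h1 (by rw [hcy, hca])
    have h3 : y ∈ zpowers a := by
      have h4 : y ∈ zpowers y := mem_zpowers y
      rw [← h2] at h4
      exact (Subgroup.zpowers_le.mpr (Subgroup.pow_mem _ (mem_zpowers a) _)) h4
    exact hmixA _ h3
  have hww : ∀ (w w' j : ℕ), 0 < w → w < p → 0 < w' → w' < p → j + 1 ≤ m →
      zpowers (a ^ (w * p ^ j) * b ^ 1) = zpowers (a ^ (w' * p ^ j) * b ^ 1) → w = w' := by
    intro w w' j hw0 hwp hw0' hwp' hj heq
    set y := a ^ (w * p ^ j) * b ^ 1 with hy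
    set y' := a ^ (w' * p ^ j) * b ^ 1 with hy'
    have hπy : π y = π b := by
      rw [hy, pow_one, map_mul]
      have h5 : π (a ^ (w * p ^ j)) = 1 := (hker _).mpr (Subgroup.pow_mem _ (mem_zpowers a) _)
      rw [h5, one_mul]
    have hg : a ^ (((w' * p ^ j : ℕ) : ℤ) - ((w * p ^ j : ℕ) : ℤ)) ∈ zpowers (y ^ p) := by
      apply hint y hπy
      · have hy'B : y' ∈ zpowers y := by rw [heq]; exact mem_zpowers y'
        have hd : y' * y⁻¹ = a ^ (((w' * p ^ j : ℕ) : ℤ) - ((w * p ^ j : ℕ) : ℤ)) := by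
          rw [zpow_sub, zpow_natCast, zpow_natCast, hy, hy']
          group
        rw [← hd]
        exact Subgroup.mul_mem _ hy'B (Subgroup.inv_mem _ (mem_zpowers y))
      · exact zpow_mem (mem_zpowers a) _
    obtain ⟨u, hu, hyp⟩ := hpowp (w * p ^ j) 1
    have hyple : zpowers (y ^ p) ≤ zpowers (a ^ p ^ (j+1)) := by
      apply Subgroup.zpowers_le.mpr
      rw [← hy] at hyp
      rw [hyp]
      have he : (w * p ^ j) * p * u = p ^ (j+1) * (w * u) := by rw [pow_succ]; ring
      rw [he, pow_mul]
      exact Subgroup.pow_mem _ (mem_zpowers _) _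
    have hmem := hyple hg
    have hdvd := (MPL_zpow_mem_zpowers_iff ha (pow_dvd_pow p (by omega : j+1 ≤ m)) _).mp hmem
    have hpj : (0:ℤ) < (p:ℤ) ^ j := by positivity
    obtain ⟨c, hc⟩ := hdvd
    have hc' : ((w' : ℤ) - w) * (p:ℤ)^j = ((p : ℤ) * c) * (p:ℤ)^j := by
      push_cast at hc ⊢
      linear_combination hc
    have hwc : (w' : ℤ) - w = (p:ℤ) * c := mul_right_cancel₀ hpj.ne' hc'
    have hw1 : (1:ℤ) ≤ (w' : ℤ) := by exact_mod_cast hw0'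
    have hw2 : ((w : ℤ)) < p := by exact_mod_cast hwp
    have hw3 : (1:ℤ) ≤ (w : ℤ) := by exact_mod_cast hw0
    have hw4 : ((w' : ℤ)) < p := by exact_mod_cast hwp'
    have hp0 : (0:ℤ) ≤ p := by positivity
    have hcz : c = 0 := by
      rcases lt_trichotomy c 0 with h | h | h
      · exfalso
        have hcle : c ≤ -1 := by omega
        have h6 : (p:ℤ) * c ≤ (p:ℤ) * (-1) := mul_le_mul_of_nonneg_left hcle hp0
        linarith
      · exact h
      · exfalso
        have hcge : 1 ≤ c := by omega
        have h6 : (p:ℤ) * 1 ≤ (p:ℤ) * c := mul_le_mul_of_nonneg_left hcge hp0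
        linarith
    rw [hcz, mul_zero, sub_eq_zero] at hwc
    exact_mod_cast hwc.symm
  have hfin2 : ∀ i : Fin 2, i = 0 ∨ i = 1 := by
    intro i
    rcases i with ⟨iv, hiv⟩
    match iv, hiv with
    | 0, _ => exact Or.inl rfl
    | 1, _ => exact Or.inr rfl
  have hΦinj : Function.Injective Φ := by
    rintro (⟨k1, w1⟩ | i1) (⟨k2, w2⟩ | i2) heq
    · have hc1 := hΦcard k1 w1
      rw [heq] at hc1
      have hc2 := hΦcard k2 w2
      have hk' := Nat.pow_right_injective hp2 (hc2.symm.trans hc1)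
      have hkf : k1 = k2 := Fin.ext (by omega)
      subst hkf
      have hk1m : (k1 : ℕ) < m := k1.isLt
      simp only [Φ, Sum.elim_inl] at heq
      set j := m - (k1 : ℕ) - 1 with hjdef
      have hj1 : j + 1 ≤ m := by omega
      have hw12 : (w1 : ℕ) = (w2 : ℕ) := by
        by_cases h10 : (w1 : ℕ) = 0 <;> by_cases h20 : (w2 : ℕ) = 0
        · rw [h10, h20]
        · rw [if_pos h10, if_neg h20] at heq
          by_cases h2p : (w2 : ℕ) = p
          · rw [if_pos h2p] at heq
            exfalso
            have hbK : b ∈ zpowers (a ^ p ^ (m - (k1:ℕ))) ⊔ zpowers b :=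
              (le_sup_right : zpowers b ≤ _) (mem_zpowers b)
            rw [← heq] at hbK
            exact hbA ((Subgroup.zpowers_le.mpr (Subgroup.pow_mem _ (mem_zpowers a) _)) hbK)
          · rw [if_neg h2p] at heq
            exfalso
            have hyB : a ^ ((w2:ℕ) * p ^ j) * b ^ 1 ∈ zpowers (a ^ ((w2:ℕ) * p ^ j) * b ^ 1) :=
              mem_zpowers _
            rw [← heq] at hyB
            exact hmixA _ ((Subgroup.zpowers_le.mpr (Subgroup.pow_mem _ (mem_zpowers a) _)) hyB)
        · rw [if_pos h20, if_neg h10] at heq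
          by_cases h1p : (w1 : ℕ) = p
          · rw [if_pos h1p] at heq
            exfalso
            have hbK : b ∈ zpowers (a ^ p ^ (m - (k1:ℕ))) ⊔ zpowers b :=
              (le_sup_right : zpowers b ≤ _) (mem_zpowers b)
            rw [heq] at hbK
            exact hbA ((Subgroup.zpowers_le.mpr (Subgroup.pow_mem _ (mem_zpowers a) _)) hbK)
          · rw [if_neg h1p] at heq
            exfalso
            have hyB : a ^ ((w1:ℕ) * p ^ j) * b ^ 1 ∈ zpowers (a ^ ((w1:ℕ) * p ^ j) * b ^ 1) :=
              mem_zpowers _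
            rw [heq] at hyB
            exact hmixA _ ((Subgroup.zpowers_le.mpr (Subgroup.pow_mem _ (mem_zpowers a) _)) hyB)
        · rw [if_neg h10, if_neg h20] at heq
          by_cases h1p : (w1 : ℕ) = p <;> by_cases h2p : (w2 : ℕ) = p
          · rw [h1p, h2p]
          · rw [if_pos h1p, if_neg h2p] at heq
            exfalso
            have hbK : b ∈ zpowers (a ^ p ^ (m - (k1:ℕ))) ⊔ zpowers b :=
              (le_sup_right : zpowers b ≤ _) (mem_zpowers b)
            rw [heq] at hbK
            have hw2p : (w2 : ℕ) < p := by have := w2.isLt; omega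
            exact hbB (w2:ℕ) j (by omega) hw2p hj1 hbK
          · rw [if_pos h2p, if_neg h1p] at heq
            exfalso
            have hbK : b ∈ zpowers (a ^ p ^ (m - (k1:ℕ))) ⊔ zpowers b :=
              (le_sup_right : zpowers b ≤ _) (mem_zpowers b)
            rw [← heq] at hbK
            have hw1p : (w1 : ℕ) < p := by have := w1.isLt; omega
            exact hbB (w1:ℕ) j (by omega) hw1p hj1 hbK
          · rw [if_neg h1p, if_neg h2p] at heq
            have hw1p : (w1 : ℕ) < p := by have := w1.isLt; omega
            have hw2p : (w2 : ℕ) < p := by have := w2.isLt; omega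
            exact hww (w1:ℕ) (w2:ℕ) j (by omega) hw1p (by omega) hw2p hj1 heq
      rw [Fin.ext hw12]
    · exfalso
      have hc1 := hΦcard k1 w1
      rw [heq] at hc1
      rcases hfin2 i2 with rfl | rfl
      · rw [hΦ0] at hc1
        rw [Subgroup.card_bot] at hc1
        have := Nat.one_lt_pow (n := (k1:ℕ)+1) (by omega) hp.one_lt
        omega
      · rw [hΦ1] at hc1
        rw [Subgroup.card_top, hcard] at hc1
        have := Nat.pow_right_injective hp2 hc1
        have := k1.isLt
        omega
    · exfalso
      have hc1 := hΦcard k2 w2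
      rw [← heq] at hc1
      rcases hfin2 i1 with rfl | rfl
      · rw [hΦ0] at hc1
        rw [Subgroup.card_bot] at hc1
        have := Nat.one_lt_pow (n := (k2:ℕ)+1) (by omega) hp.one_lt
        omega
      · rw [hΦ1] at hc1
        rw [Subgroup.card_top, hcard] at hc1
        have := Nat.pow_right_injective hp2 hc1
        have := k2.isLt
        omega
    · rcases hfin2 i1 with rfl | rfl <;> rcases hfin2 i2 with rfl | rfl
      · rfl
      · exfalso
        rw [hΦ0, hΦ1] at heq
        have hcc := congrArg (fun (S : Subgroup G) => Nat.card S) heq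
        simp only [Subgroup.card_bot, Subgroup.card_top] at hcc
        rw [hcard] at hcc
        have := Nat.one_lt_pow (n := lam) (by omega) hp.one_lt
        omega
      · exfalso
        rw [hΦ0, hΦ1] at heq
        have hcc := congrArg (fun (S : Subgroup G) => Nat.card S) heq
        simp only [Subgroup.card_bot, Subgroup.card_top] at hcc
        rw [hcard] at hcc
        have := Nat.one_lt_pow (n := lam) (by omega) hp.one_lt
        omega
      · rfl
  have hΦsurj : Function.Surjective Φ := by
    intro H
    by_cases hHA : H ≤ zpowers a
    · obtain ⟨j, hj, hHeq⟩ := MPL_subgroup_of_cyclic hp ha H hHA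
      by_cases hjm : j = m
      · refine ⟨Sum.inr 0, ?_⟩
        rw [hΦ0, hHeq, hjm, hM, Subgroup.zpowers_one_eq_bot]
      · refine ⟨Sum.inl (⟨m - j - 1, by omega⟩, ⟨0, by omega⟩), ?_⟩
        show (if (0:ℕ) = 0 then zpowers (a ^ p ^ (m - (m - j - 1) - 1))
          else if (0:ℕ) = p then zpowers (a ^ p ^ (m - (m - j - 1))) ⊔ zpowers b
          else zpowers (a ^ (0 * p ^ (m - (m - j - 1) - 1)) * b ^ 1)) = H
        rw [if_pos rfl, show m - (m - j - 1) - 1 = j from by omega, hHeq]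
    · obtain ⟨g, hgH, hgA⟩ := SetLike.not_le_iff_exists.mp hHA
      obtain ⟨s, hs, hπg⟩ := hdec g
      have hs0 : s ≠ 0 := by
        intro h0; rw [h0, pow_zero] at hπg; exact hgA ((hker g).mp hπg)
      have hcop : Nat.Coprime s p :=
        ((hp.coprime_iff_not_dvd).mpr (Nat.not_dvd_of_pos_of_lt (by omega) hs)).symm
      have hfermat : s ^ (p - 1) ≡ 1 [MOD p] := by
        have hf := Nat.ModEq.pow_totient hcop
        rwa [Nat.totient_prime hp] at hf
      set x₁ := g ^ (s ^ (p - 2)) with hx₁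
      have hx₁H : x₁ ∈ H := Subgroup.pow_mem _ hgH _
      have hπx₁ : π x₁ = π b := by
        have he : s * s ^ (p - 2) = s ^ (p - 1) := by
          rw [← pow_succ']; congr 1; omega
        rw [hx₁, map_pow, hπg, ← pow_mul, he]
        have h9 : (π b) ^ (s ^ (p-1)) = (π b) ^ 1 := by
          rw [pow_eq_pow_iff_modEq, hordπb]; exact hfermat
        rw [h9, pow_one]
      have hx₁b : x₁ * b⁻¹ ∈ zpowers a := by
        apply (hker _).mp; rw [map_mul, map_inv, hπx₁, mul_inv_cancel]
      obtain ⟨z, hz⟩ := hx₁b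
      have hz' : a ^ z = x₁ * b⁻¹ := hz
      set n₀ := (z % ((p^m : ℕ) : ℤ)).toNat with hn₀
      have hmpos : (0:ℤ) < ((p^m : ℕ) : ℤ) := by positivity
      have hzn : a ^ z = a ^ n₀ := by
        have h1 : a ^ z = a ^ (z % ((p^m : ℕ) : ℤ)) := by
          rw [zpow_eq_zpow_iff_modEq, ha]
          exact (Int.emod_emod_of_dvd z dvd_rfl).symm
        have h2 : a ^ (z % ((p^m : ℕ) : ℤ)) = a ^ n₀ := by
          rw [← zpow_natCast a n₀, hn₀, Int.toNat_of_nonneg (Int.emod_nonneg z hmpos.ne')]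
        rw [h1, h2]
      set x := a ^ n₀ * b ^ 1 with hx
      have hxx₁ : x = x₁ := by rw [hx, pow_one, ← hzn, hz']; group
      have hxH : x ∈ H := by rw [hxx₁]; exact hx₁H
      have hπx : π x = π b := by rw [hxx₁]; exact hπx₁
      obtain ⟨j, hj, hHA2⟩ := MPL_subgroup_of_cyclic hp ha (H ⊓ zpowers a) inf_le_right
      have hHr := hrecon H x hxH hπx
      by_cases hj0 : j = 0
      · refine ⟨Sum.inr 1, ?_⟩
        rw [hΦ1]
        have haH : a ∈ H := by
          have h1 : a ∈ zpowers (a ^ p ^ j) := by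
            rw [hj0, pow_zero, pow_one]; exact mem_zpowers a
          rw [← hHA2] at h1; exact h1.1
        have hbH : b ∈ H := by
          have h1 : a ^ n₀ ∈ H := Subgroup.pow_mem _ haH n₀
          have h2 : b = (a ^ n₀)⁻¹ * x := by rw [hx, pow_one]; group
          rw [h2]; exact Subgroup.mul_mem _ (Subgroup.inv_mem _ h1) hxH
        symm
        rw [eq_top_iff, ← hgen, Subgroup.closure_le]
        rintro y hy
        simp only [Set.mem_insert_iff, Set.mem_singleton_iff] at hy
        rcases hy with rfl | rfl
        · exact haH
        · exact hbH
      · have hj1 : 1 ≤ j := by omega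
        by_cases hdv : p ^ j ∣ n₀
        · refine ⟨Sum.inl (⟨m - j, by omega⟩, ⟨p, by omega⟩), ?_⟩
          show (if p = 0 then zpowers (a ^ p ^ (m - (m - j) - 1))
            else if p = p then zpowers (a ^ p ^ (m - (m - j))) ⊔ zpowers b
            else zpowers (a ^ (p * p ^ (m - (m - j) - 1)) * b ^ 1)) = H
          rw [if_neg (by omega : ¬ p = 0), if_pos rfl, show m - (m - j) = j from by omega]
          have hanH : a ^ n₀ ∈ zpowers (a ^ p ^ j) := by
            obtain ⟨c, hc⟩ := hdv
            rw [hc, pow_mul]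
            exact Subgroup.pow_mem _ (mem_zpowers _) _
          have haj : a ^ p ^ j ∈ H := by
            have h1 : a ^ p ^ j ∈ H ⊓ zpowers a := by rw [hHA2]; exact mem_zpowers _
            exact h1.1
          have hbH : b ∈ H := by
            have h1 : a ^ n₀ ∈ H := by
              have h3 : a ^ n₀ ∈ H ⊓ zpowers a := by rw [hHA2]; exact hanH
              exact h3.1
            have h2 : b = (a ^ n₀)⁻¹ * x := by rw [hx, pow_one]; group
            rw [h2]; exact Subgroup.mul_mem _ (Subgroup.inv_mem _ h1) hxH
          apply le_antisymm
          · exact sup_le (Subgroup.zpowers_le.mpr haj) (Subgroup.zpowers_le.mpr hbH)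
          · rw [hHr]
            apply sup_le
            · rw [hHA2]; exact le_sup_left
            · apply Subgroup.zpowers_le.mpr
              rw [hx]
              refine Subgroup.mul_mem _ ((le_sup_left : zpowers (a ^ p ^ j) ≤ _) hanH) ?_
              rw [pow_one]
              exact (le_sup_right : zpowers b ≤ _) (mem_zpowers b)
        · obtain ⟨u, hu, hxp⟩ := hpowp n₀ 1
          have hxpH : a ^ (n₀ * p * u) ∈ H ⊓ zpowers a := by
            constructor
            · rw [← hx] at hxp; rw [← hxp]; exact Subgroup.pow_mem _ hxH p
            · exact Subgroup.pow_mem _ (mem_zpowers a) _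
          rw [hHA2] at hxpH
          have hdvd1 : p ^ j ∣ n₀ * p * u :=
            (MPL_pow_mem_zpowers_iff ha (pow_dvd_pow p hj) _).mp hxpH
          have hcopu : Nat.Coprime (p ^ j) u :=
            Nat.Coprime.pow_left _ (hp.coprime_iff_not_dvd.mpr hu)
          have hdvd2 : p ^ j ∣ n₀ * p := hcopu.dvd_of_dvd_mul_right hdvd1
          obtain ⟨c, hc⟩ := hdvd2
          have hpe : p ^ j = p ^ (j-1) * p := by rw [← pow_succ]; congr 1; omega
          have hn₀c : n₀ = p ^ (j-1) * c := by
            rw [hpe] at hc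
            have h5 : n₀ * p = (p ^ (j-1) * c) * p := by rw [hc]; ring
            exact Nat.eq_of_mul_eq_mul_right hp.pos h5
          have hcnd : ¬ p ∣ c := by
            intro hd; apply hdv
            obtain ⟨e, rfl⟩ := hd
            rw [hn₀c]
            have h6 : p ^ (j-1) * (p * e) = p ^ j * e := by rw [hpe]; ring
            rw [h6]
            exact Dvd.intro e rfl
          set w := c % p with hw
          have hw0 : w ≠ 0 := fun h => hcnd (Nat.dvd_of_mod_eq_zero h)
          have hwp : w < p := Nat.mod_lt _ hp.pos
          refine ⟨Sum.inl (⟨m - j, by omega⟩, ⟨w, by omega⟩), ?_⟩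
          show (if w = 0 then zpowers (a ^ p ^ (m - (m - j) - 1))
            else if w = p then zpowers (a ^ p ^ (m - (m - j))) ⊔ zpowers b
            else zpowers (a ^ (w * p ^ (m - (m - j) - 1)) * b ^ 1)) = H
          rw [if_neg hw0, if_neg (by omega : ¬ w = p),
            show m - (m - j) - 1 = j - 1 from by omega]
          set y := a ^ (w * p ^ (j-1)) * b ^ 1 with hy
          have hdmem : y * x⁻¹ ∈ zpowers (a ^ p ^ j) := by
            have hd : y * x⁻¹ = a ^ (((w * p ^ (j-1) : ℕ) : ℤ) - ((n₀ : ℕ) : ℤ)) := by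
              rw [zpow_sub, zpow_natCast, zpow_natCast, hy, hx]
              group
            rw [hd, MPL_zpow_mem_zpowers_iff ha (pow_dvd_pow p hj) _]
            have hmod : ((p:ℕ) : ℤ) ∣ ((c:ℕ):ℤ) - ((w:ℕ):ℤ) := (Nat.mod_modEq c p).dvd
            obtain ⟨t, ht⟩ := hmod
            refine ⟨-t, ?_⟩
            have hcast : ((w * p ^ (j-1) : ℕ) : ℤ) - ((n₀ : ℕ) : ℤ)
                = (p:ℤ)^(j-1) * ((w:ℤ) - (c:ℤ)) := by
              rw [hn₀c]; push_cast; ring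
            rw [hcast]
            push_cast
            have hpj2 : ((p:ℤ))^j = (p:ℤ)^(j-1) * p := by rw [← pow_succ]; congr 1; omega
            rw [hpj2]
            linear_combination (-(p:ℤ)^(j-1)) * ht
          have hyH : y ∈ H := by
            have h1 : y * x⁻¹ ∈ H := by
              have h3 : y * x⁻¹ ∈ H ⊓ zpowers a := by rw [hHA2]; exact hdmem
              exact h3.1
            have h2 : y = (y * x⁻¹) * x := by group
            rw [h2]; exact Subgroup.mul_mem _ h1 hxH
          have hcy : Nat.card (zpowers y) = p ^ (m - j + 1) := by
            rw [Nat.card_zpowers, hy,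
              hordmix w (j-1) (Nat.not_dvd_of_pos_of_lt (by omega) hwp) (by omega)]
            congr 1; omega
          have hcH : Nat.card H = p ^ (m - j + 1) := by
            rw [hcardH H hHA, hHA2, Nat.card_zpowers,
              show a ^ p ^ j = a ^ (1 * p ^ j) from by rw [one_mul],
              hordpow 1 j (by simpa using hp.one_lt.ne') hj, ← pow_succ']
          exact Subgroup.eq_of_le_of_card_ge (Subgroup.zpowers_le.mpr hyH) (by rw [hcy, hcH])
  have hcount := Nat.card_eq_of_bijective Φ ⟨hΦinj, hΦsurj⟩
  rw [← hcount]
  have hidx : Nat.card (Fin m × Fin (p+1) ⊕ Fin 2) = m * (p+1) + 2 := by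
    simp
  rw [hidx, Nat.mul_comm]
end

section
/- The dihedral group of order 2m has exactly τ(m) + σ(m) subgroups, where τ and σ denote the number-of-divisors and sum-of-divisors functions. -/
namespace DihedralCount

open DihedralGroup

variable {m : ℕ}

/-- The rotation subgroup attached to a divisor `e` of `m`: rotations `r i` with
`i ≡ 0 mod e` (as detected by the cast `ZMod m → ZMod e`). -/
def rotSub (e : ℕ) (he : e ∣ m) : Subgroup (DihedralGroup m) where
  carrier := {x | match x with
    | DihedralGroup.r i => ZMod.castHom he (ZMod e) i = 0
    | DihedralGroup.sr _ => False}
  one_mem' := by show ZMod.castHom he (ZMod e) 0 = 0; simp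
  mul_mem' := by
    rintro (a | a) (b | b) ha hb <;>
      simp_all [Set.mem_setOf_eq, ZMod.castHom_apply, ZMod.cast_add he, ZMod.cast_sub he]
  inv_mem' := by
    rintro (a | a) ha
    · show ZMod.castHom he (ZMod e) (-a) = 0
      simp_all [Set.mem_setOf_eq, ZMod.castHom_apply, ZMod.cast_neg he]
    · exact ha

/-- The dihedral subgroup attached to a divisor `e` of `m` and `j : ZMod e`. -/
def dihSub (e : ℕ) (he : e ∣ m) (j : ZMod e) : Subgroup (DihedralGroup m) where
  carrier := {x | match x with
    | DihedralGroup.r i => ZMod.castHom he (ZMod e) i = 0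
    | DihedralGroup.sr i => ZMod.castHom he (ZMod e) i = j}
  one_mem' := by show ZMod.castHom he (ZMod e) 0 = 0; simp
  mul_mem' := by
    rintro (a | a) (b | b) ha hb <;>
      simp_all [Set.mem_setOf_eq, ZMod.castHom_apply, ZMod.cast_add he, ZMod.cast_sub he]
  inv_mem' := by
    rintro (a | a) ha
    · show ZMod.castHom he (ZMod e) (-a) = 0
      simp_all [Set.mem_setOf_eq, ZMod.castHom_apply, ZMod.cast_neg he]
    · exact ha

@[simp] lemma r_mem_rotSub {e : ℕ} {he : e ∣ m} {i : ZMod m} :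
    DihedralGroup.r i ∈ rotSub e he ↔ ZMod.castHom he (ZMod e) i = 0 := Iff.rfl

@[simp] lemma sr_mem_rotSub {e : ℕ} {he : e ∣ m} {i : ZMod m} :
    DihedralGroup.sr i ∈ rotSub e he ↔ False := Iff.rfl

@[simp] lemma r_mem_dihSub {e : ℕ} {he : e ∣ m} {j : ZMod e} {i : ZMod m} :
    DihedralGroup.r i ∈ dihSub e he j ↔ ZMod.castHom he (ZMod e) i = 0 := Iff.rfl

@[simp] lemma sr_mem_dihSub {e : ℕ} {he : e ∣ m} {j : ZMod e} {i : ZMod m} :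
    DihedralGroup.sr i ∈ dihSub e he j ↔ ZMod.castHom he (ZMod e) i = j := Iff.rfl


lemma addSubgroup_eq_ker (hm : m ≠ 0) (A : AddSubgroup (ZMod m)) :
    ∃ (e : ℕ) (he : e ∣ m), ∀ i : ZMod m, i ∈ A ↔ ZMod.castHom he (ZMod e) i = 0 := by
  haveI : NeZero m := ⟨hm⟩
  set B : AddSubgroup ℤ := A.comap (Int.castAddHom (ZMod m)) with hBdef
  obtain ⟨a, hB⟩ := Int.subgroup_cyclic B
  have hmB : (m : ℤ) ∈ B := by
    simp only [hBdef, AddSubgroup.mem_comap, Int.coe_castAddHom, Int.cast_natCast,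
      ZMod.natCast_self]
    exact A.zero_mem
  have ham : a ∣ (m : ℤ) := by
    rw [hB, AddSubgroup.mem_closure_singleton] at hmB
    obtain ⟨n, hn⟩ := hmB
    exact ⟨n, by rw [← hn, zsmul_eq_mul]; simp only [Int.cast_id]; ring⟩
  have he : a.natAbs ∣ m := by
    rw [← Int.natAbs_natCast m]
    exact Int.natAbs_dvd_natAbs.mpr ham
  refine ⟨a.natAbs, he, fun i => ?_⟩
  have h1 : i ∈ A ↔ ((i.val : ℤ) : ZMod m) ∈ A := by
    rw [Int.cast_natCast, ZMod.natCast_rightInverse i]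
  rw [h1, show (((i.val : ℤ) : ZMod m) ∈ A) ↔ (i.val : ℤ) ∈ B from Iff.rfl, hB,
    AddSubgroup.mem_closure_singleton]
  have h2 : (∃ n : ℤ, n • a = (i.val : ℤ)) ↔ a ∣ (i.val : ℤ) := by
    constructor
    · rintro ⟨n, hn⟩; exact ⟨n, by rw [← hn, zsmul_eq_mul]; simp only [Int.cast_id]; ring⟩
    · rintro ⟨n, hn⟩; exact ⟨n, by rw [hn, zsmul_eq_mul]; simp only [Int.cast_id]; ring⟩
  have h3 : ZMod.castHom he (ZMod a.natAbs) i = (i.val : ZMod a.natAbs) := by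
    conv_lhs => rw [← ZMod.natCast_rightInverse i]
    exact map_natCast _ _
  rw [h2, ← Int.natAbs_dvd, Int.natCast_dvd_natCast, ← ZMod.natCast_eq_zero_iff, h3]


lemma castHom_natCast {e : ℕ} (he : e ∣ m) (k : ℕ) :
    ZMod.castHom he (ZMod e) ((k : ℕ) : ZMod m) = (k : ZMod e) := map_natCast _ k

lemma eq_of_rot_eq {e₁ e₂ : ℕ} {h₁ : e₁ ∣ m} {h₂ : e₂ ∣ m}
    (h : (rotSub e₁ h₁ : Subgroup (DihedralGroup m)) = rotSub e₂ h₂) : e₁ = e₂ := by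
  have k₁ : DihedralGroup.r ((e₁ : ℕ) : ZMod m) ∈ rotSub e₁ h₁ := by
    rw [r_mem_rotSub, castHom_natCast, ZMod.natCast_self]
  have k₂ : DihedralGroup.r ((e₂ : ℕ) : ZMod m) ∈ rotSub e₂ h₂ := by
    rw [r_mem_rotSub, castHom_natCast, ZMod.natCast_self]
  rw [h, r_mem_rotSub, castHom_natCast, ZMod.natCast_eq_zero_iff] at k₁
  rw [← h, r_mem_rotSub, castHom_natCast, ZMod.natCast_eq_zero_iff] at k₂
  exact Nat.dvd_antisymm k₂ k₁

lemma eq_of_dih_eq {e₁ e₂ : ℕ} {h₁ : e₁ ∣ m} {h₂ : e₂ ∣ m} {j₁ : ZMod e₁} {j₂ : ZMod e₂}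
    (h : (dihSub e₁ h₁ j₁ : Subgroup (DihedralGroup m)) = dihSub e₂ h₂ j₂) : e₁ = e₂ := by
  have k₁ : DihedralGroup.r ((e₁ : ℕ) : ZMod m) ∈ dihSub e₁ h₁ j₁ := by
    rw [r_mem_dihSub, castHom_natCast, ZMod.natCast_self]
  have k₂ : DihedralGroup.r ((e₂ : ℕ) : ZMod m) ∈ dihSub e₂ h₂ j₂ := by
    rw [r_mem_dihSub, castHom_natCast, ZMod.natCast_self]
  rw [h, r_mem_dihSub, castHom_natCast, ZMod.natCast_eq_zero_iff] at k₁
  rw [← h, r_mem_dihSub, castHom_natCast, ZMod.natCast_eq_zero_iff] at k₂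
  exact Nat.dvd_antisymm k₂ k₁

lemma jeq_of_dih_eq {e : ℕ} {h₁ h₂ : e ∣ m} [NeZero e] {j₁ j₂ : ZMod e}
    (h : (dihSub e h₁ j₁ : Subgroup (DihedralGroup m)) = dihSub e h₂ j₂) : j₁ = j₂ := by
  have k₁ : DihedralGroup.sr ((j₁.val : ℕ) : ZMod m) ∈ dihSub e h₁ j₁ := by
    rw [sr_mem_dihSub, castHom_natCast, ZMod.natCast_rightInverse j₁]
  rw [h, sr_mem_dihSub, castHom_natCast, ZMod.natCast_rightInverse j₁] at k₁
  exact k₁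

lemma rot_ne_dih {e₁ e₂ : ℕ} {h₁ : e₁ ∣ m} {h₂ : e₂ ∣ m} [NeZero e₂] {j : ZMod e₂} :
    (rotSub e₁ h₁ : Subgroup (DihedralGroup m)) ≠ dihSub e₂ h₂ j := by
  intro h
  have k : DihedralGroup.sr ((j.val : ℕ) : ZMod m) ∈ dihSub e₂ h₂ j := by
    rw [sr_mem_dihSub, castHom_natCast, ZMod.natCast_rightInverse j]
  rw [← h, sr_mem_rotSub] at k
  exact k

lemma subgroup_classify (hm : m ≠ 0) (H : Subgroup (DihedralGroup m)) :
    (∃ (e : ℕ) (he : e ∣ m), H = rotSub e he) ∨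
      (∃ (e : ℕ) (he : e ∣ m) (j : ZMod e), H = dihSub e he j) := by
  set A : AddSubgroup (ZMod m) :=
    { carrier := {i | DihedralGroup.r i ∈ H}
      zero_mem' := by show DihedralGroup.r 0 ∈ H; exact DihedralGroup.one_def ▸ H.one_mem
      add_mem' := fun {a b} ha hb => by
        show DihedralGroup.r (a + b) ∈ H
        rw [← r_mul_r]; exact H.mul_mem ha hb
      neg_mem' := fun {a} ha => by
        show DihedralGroup.r (-a) ∈ H
        exact H.inv_mem ha } with hAdef
  obtain ⟨e, he, hA⟩ := addSubgroup_eq_ker hm A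
  by_cases hs : ∃ i₀, DihedralGroup.sr i₀ ∈ H
  · obtain ⟨i₀, hi₀⟩ := hs
    right
    refine ⟨e, he, ZMod.castHom he (ZMod e) i₀, ?_⟩
    ext x
    rcases x with i | i
    · rw [r_mem_dihSub, ← hA i]; rfl
    · rw [sr_mem_dihSub]
      constructor
      · intro hi
        have : DihedralGroup.r (i₀ - i) ∈ H := by
          rw [← sr_mul_sr]; exact H.mul_mem hi hi₀
        have : ZMod.castHom he (ZMod e) (i₀ - i) = 0 := (hA _).mp this
        rw [map_sub, sub_eq_zero] at this
        exact this.symm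
      · intro hi
        have h0 : ZMod.castHom he (ZMod e) (i - i₀) = 0 := by
          rw [map_sub, hi, sub_self]
        have hr : DihedralGroup.r (i - i₀) ∈ H := (hA _).mpr h0
        have := H.mul_mem hi₀ hr
        rw [sr_mul_r, add_sub_cancel] at this
        exact this
  · push_neg at hs
    left
    refine ⟨e, he, ?_⟩
    ext x
    rcases x with i | i
    · rw [r_mem_rotSub, ← hA i]; rfl
    · simp only [sr_mem_rotSub, iff_false]
      exact hs i


instance (m : ℕ) (e : {x // x ∈ m.divisors}) : NeZero (e.1) :=
  ⟨(Nat.pos_of_mem_divisors e.2).ne'⟩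

/-- The index type parametrizing the subgroups of `DihedralGroup m`. -/
abbrev Idx (m : ℕ) : Type :=
  {e // e ∈ m.divisors} ⊕ Σ e : {e // e ∈ m.divisors}, ZMod e.1

/-- The subgroup attached to an index. -/
def toSub (m : ℕ) : Idx m → Subgroup (DihedralGroup m)
  | Sum.inl e => rotSub e.1 (Nat.dvd_of_mem_divisors e.2)
  | Sum.inr ⟨e, j⟩ => dihSub e.1 (Nat.dvd_of_mem_divisors e.2) j

lemma toSub_bijective (hm : m ≠ 0) : Function.Bijective (toSub m) := by
  constructor
  · rintro (e₁ | ⟨e₁, j₁⟩) (e₂ | ⟨e₂, j₂⟩) h <;> simp only [toSub] at h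
    · exact congrArg Sum.inl (Subtype.ext (eq_of_rot_eq h))
    · exact absurd h rot_ne_dih
    · exact absurd h.symm rot_ne_dih
    · obtain rfl : e₁ = e₂ := Subtype.ext (eq_of_dih_eq h)
      exact congrArg Sum.inr (congrArg (Sigma.mk e₁) (jeq_of_dih_eq h))
  · intro H
    rcases subgroup_classify hm H with ⟨e, he, rfl⟩ | ⟨e, he, j, rfl⟩
    · exact ⟨Sum.inl ⟨e, Nat.mem_divisors.mpr ⟨he, hm⟩⟩, rfl⟩
    · exact ⟨Sum.inr ⟨⟨e, Nat.mem_divisors.mpr ⟨he, hm⟩⟩, j⟩, rfl⟩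

end DihedralCount

theorem dihedral_subgroup_count (m : ℕ) (hm : 1 ≤ m) :
    Nat.card (Subgroup (DihedralGroup m)) =
      m.divisors.card + ∑ d ∈ m.divisors, d := by
  have hm0 : m ≠ 0 := by omega
  rw [← Nat.card_congr (Equiv.ofBijective _ (DihedralCount.toSub_bijective hm0)),
    Nat.card_eq_fintype_card, Fintype.card_sum, Fintype.card_coe, Fintype.card_sigma]
  congr 1
  calc ∑ e : {x // x ∈ m.divisors}, Fintype.card (ZMod e.1)
      = ∑ e : {x // x ∈ m.divisors}, (e : ℕ) :=
        Finset.sum_congr rfl fun e _ => ZMod.card e.1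
    _ = ∑ d ∈ m.divisors, d := Finset.sum_coe_sort m.divisors (fun d => d)
end

section
/- The generalized quaternion group Q_{2^λ} has exactly 2^{λ−1} + λ − 1 subgroups, for λ ≥ 3. -/
/-!
A subgroup `H` of `QuaternionGroup n` is determined by its rotation part
`K = {i | a i ∈ H} ≤ ZMod (2 * n)` and by the set of `i` with `xa i ∈ H`, which is either empty or
a single coset of `K`; in the second case `n ∈ K`, because `(xa i) ^ 2 = a n`. Conversely every
such datum is a subgroup. A subgroup of `ZMod N` is determined by its index `d ∣ N`, and it
contains `n` exactly when `d ∣ n`, so `QuaternionGroup n` has `τ(2n) + σ(n)` subgroups.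
For `n = 2 ^ (λ - 2)` this is `λ + (2 ^ (λ - 1) - 1)`.
-/

namespace ZMod

variable {N : ℕ}

-- The quotient `ZMod N ⧸ K` is cyclic, generated by the image of `1`, whose order is the index.
theorem natCast_mem_iff_index_dvd (K : AddSubgroup (ZMod N)) (m : ℕ) :
    (m : ZMod N) ∈ K ↔ K.index ∣ m := by
  have hgen (x : ZMod N ⧸ K) : x ∈ AddSubgroup.zmultiples (QuotientAddGroup.mk 1 : ZMod N ⧸ K) :=
    QuotientAddGroup.induction_on x fun y => ⟨(y.cast : ℤ), by
      simp only [← QuotientAddGroup.mk_zsmul, zsmul_one, intCast_zmod_cast]⟩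
  rw [AddSubgroup.index, ← addOrderOf_eq_card_of_forall_mem_zmultiples hgen,
    addOrderOf_dvd_iff_nsmul_eq_zero, ← QuotientAddGroup.mk_nsmul, QuotientAddGroup.eq_zero_iff,
    nsmul_one]

variable [NeZero N]

theorem index_injective : Function.Injective (AddSubgroup.index : AddSubgroup (ZMod N) → ℕ) := by
  intro K L h
  ext x
  rw [← natCast_zmod_val x, natCast_mem_iff_index_dvd, natCast_mem_iff_index_dvd, h]

theorem exists_addSubgroup_index_eq {d : ℕ} (hd : d ∣ N) :
    ∃ K : AddSubgroup (ZMod N), K.index = d := by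
  have : NeZero d := ⟨fun h => NeZero.ne N (Nat.eq_zero_of_zero_dvd (h ▸ hd))⟩
  refine ⟨(castHom hd (ZMod d)).toAddMonoidHom.ker, ?_⟩
  rw [AddSubgroup.index_ker, AddMonoidHom.range_eq_top.mpr (castHom_surjective hd),
    AddSubgroup.card_top, Nat.card_zmod]

noncomputable def addSubgroupsContainingEquivDivisors {m : ℕ} (hm : m ∣ N) :
    {K : AddSubgroup (ZMod N) // (m : ZMod N) ∈ K} ≃ m.divisors := by
  have hm0 : m ≠ 0 := by rintro rfl; exact NeZero.ne N (Nat.eq_zero_of_zero_dvd hm)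
  refine Equiv.ofBijective
    (fun K => ⟨K.1.index, Nat.mem_divisors.2 ⟨(natCast_mem_iff_index_dvd _ _).1 K.2, hm0⟩⟩)
    ⟨fun K L h => Subtype.ext (index_injective (congrArg Subtype.val h)), ?_⟩
  rintro ⟨d, hd⟩
  obtain ⟨K, hK⟩ := exists_addSubgroup_index_eq ((Nat.dvd_of_mem_divisors hd).trans hm)
  exact ⟨⟨K, (natCast_mem_iff_index_dvd _ _).2 (hK ▸ Nat.dvd_of_mem_divisors hd)⟩, Subtype.ext hK⟩

theorem card_addSubgroup : Nat.card (AddSubgroup (ZMod N)) = N.divisors.card := by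
  have hall (K : AddSubgroup (ZMod N)) : (N : ZMod N) ∈ K := by
    rw [natCast_self]; exact K.zero_mem
  rw [← Nat.card_congr (Equiv.subtypeUnivEquiv hall),
    Nat.card_congr (addSubgroupsContainingEquivDivisors (dvd_refl N)), Nat.card_eq_fintype_card,
    Fintype.card_coe]

end ZMod

namespace QuaternionGroup

variable {n : ℕ}

def rotations (H : Subgroup (QuaternionGroup n)) : AddSubgroup (ZMod (2 * n)) where
  carrier := {i | a i ∈ H}
  add_mem' hi hj := H.mul_mem hi hj
  zero_mem' := H.one_mem
  neg_mem' hi := H.inv_mem hi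

@[simp]
theorem mem_rotations {H : Subgroup (QuaternionGroup n)} {i : ZMod (2 * n)} :
    i ∈ rotations H ↔ a i ∈ H :=
  Iff.rfl

def rotationSubgroup (K : AddSubgroup (ZMod (2 * n))) : Subgroup (QuaternionGroup n) where
  carrier := {g | match g with | a i => i ∈ K | xa _ => False}
  one_mem' := K.zero_mem
  mul_mem' := by
    rintro (i | i) (j | j) hi hj
    exacts [K.add_mem hi hj, hj.elim, hi.elim, hi.elim]
  inv_mem' := by
    rintro (i | i) hi
    exacts [K.neg_mem hi, hi.elim]

def cosetSubgroup (K : AddSubgroup (ZMod (2 * n))) (hK : (n : ZMod (2 * n)) ∈ K)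
    (c : ZMod (2 * n) ⧸ K) : Subgroup (QuaternionGroup n) where
  carrier := {g | match g with | a i => i ∈ K | xa i => (i : ZMod (2 * n) ⧸ K) = c}
  one_mem' := K.zero_mem
  mul_mem' := by
    rintro (i | i) (j | j) hi hj
    · exact K.add_mem hi hj
    · change ((j - i : ZMod (2 * n)) : ZMod (2 * n) ⧸ K) = c
      rw [QuotientAddGroup.mk_sub, (QuotientAddGroup.eq_zero_iff i).2 hi, sub_zero, hj]
    · change ((i + j : ZMod (2 * n)) : ZMod (2 * n) ⧸ K) = c
      rw [QuotientAddGroup.mk_add, (QuotientAddGroup.eq_zero_iff j).2 hj, add_zero, hi]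
    · change (n : ZMod (2 * n)) + j - i ∈ K
      rw [← QuotientAddGroup.eq_zero_iff, QuotientAddGroup.mk_sub, QuotientAddGroup.mk_add,
        (QuotientAddGroup.eq_zero_iff _).2 hK, hi, hj, zero_add, sub_self]
  inv_mem' := by
    rintro (i | i) hi
    · exact K.neg_mem hi
    · change ((n + i : ZMod (2 * n)) : ZMod (2 * n) ⧸ K) = c
      rw [QuotientAddGroup.mk_add, (QuotientAddGroup.eq_zero_iff _).2 hK, zero_add, hi]

theorem xa_notMem_rotationSubgroup (K : AddSubgroup (ZMod (2 * n))) (i : ZMod (2 * n)) :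
    xa i ∉ rotationSubgroup K :=
  id

theorem natCast_mem_rotations {H : Subgroup (QuaternionGroup n)} {j : ZMod (2 * n)}
    (hj : xa j ∈ H) : (n : ZMod (2 * n)) ∈ rotations H := by
  simpa only [mem_rotations, xa_sq] using H.pow_mem hj 2

theorem a_sub_mul_xa (i j : ZMod (2 * n)) : a (j - i) * xa j = xa i := by
  rw [a_mul_xa, sub_sub_cancel]

theorem xa_mem_iff_sub_mem_rotations {H : Subgroup (QuaternionGroup n)} {i j : ZMod (2 * n)}
    (hj : xa j ∈ H) : xa i ∈ H ↔ j - i ∈ rotations H := by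
  refine ⟨fun hi => ?_, fun hji => a_sub_mul_xa i j ▸ H.mul_mem hji hj⟩
  rw [mem_rotations, eq_mul_inv_of_mul_eq (a_sub_mul_xa i j)]
  exact H.mul_mem hi (H.inv_mem hj)

theorem eq_rotationSubgroup {H : Subgroup (QuaternionGroup n)} (h : ∀ i, xa i ∉ H) :
    H = rotationSubgroup (rotations H) := by
  ext (i | i)
  exacts [Iff.rfl, iff_false_intro (h i)]

theorem eq_cosetSubgroup {H : Subgroup (QuaternionGroup n)} {j : ZMod (2 * n)} (hj : xa j ∈ H) :
    H = cosetSubgroup (rotations H) (natCast_mem_rotations hj) j := by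
  ext (i | i)
  · exact Iff.rfl
  · change _ ↔ ((i : ZMod (2 * n)) : ZMod (2 * n) ⧸ rotations H) = j
    rw [xa_mem_iff_sub_mem_rotations hj, QuotientAddGroup.eq, neg_add_eq_sub]

def subgroupParametrization :
    AddSubgroup (ZMod (2 * n)) ⊕
      (Σ K : {K : AddSubgroup (ZMod (2 * n)) // (n : ZMod (2 * n)) ∈ K}, ZMod (2 * n) ⧸ K.1) →
      Subgroup (QuaternionGroup n) :=
  Sum.elim rotationSubgroup fun p => cosetSubgroup p.1.1 p.1.2 p.2

-- Injectivity: `rotations` recovers `K` definitionally, and `xa j` detects the coset of `j`.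
theorem subgroupParametrization_bijective :
    Function.Bijective (subgroupParametrization (n := n)) := by
  constructor
  · rintro (K | ⟨⟨K, hK⟩, c⟩) (L | ⟨⟨L, hL⟩, c'⟩) h
    · exact congrArg Sum.inl (congrArg rotations h)
    · induction c' using QuotientAddGroup.induction_on with | H j => ?_
      exact absurd ((congrArg (xa j ∈ ·) h).mpr rfl) (xa_notMem_rotationSubgroup K j)
    · induction c using QuotientAddGroup.induction_on with | H j => ?_
      exact absurd ((congrArg (xa j ∈ ·) h).mp rfl) (xa_notMem_rotationSubgroup L j)
    · obtain rfl : K = L := congrArg rotations h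
      induction c using QuotientAddGroup.induction_on with | H j => ?_
      obtain rfl : (j : ZMod (2 * n) ⧸ K) = c' := (congrArg (xa j ∈ ·) h).mp rfl
      rfl
  · intro H
    by_cases h : ∃ j, xa j ∈ H
    · obtain ⟨j, hj⟩ := h
      exact ⟨Sum.inr ⟨⟨_, natCast_mem_rotations hj⟩, j⟩, (eq_cosetSubgroup hj).symm⟩
    · exact ⟨Sum.inl (rotations H), (eq_rotationSubgroup (not_exists.mp h)).symm⟩

theorem card_subgroup [NeZero n] :
    Nat.card (Subgroup (QuaternionGroup n)) = (2 * n).divisors.card + ∑ d ∈ n.divisors, d := by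
  let e := ZMod.addSubgroupsContainingEquivDivisors (dvd_mul_left n 2)
  rw [← Nat.card_eq_of_bijective _ subgroupParametrization_bijective, Nat.card_sum,
    ZMod.card_addSubgroup, Nat.card_congr (Equiv.sigmaCongrLeft' e), Nat.card_sigma,
    ← Finset.sum_coe_sort n.divisors]
  exact congrArg _ (Fintype.sum_congr _ _ fun d => congrArg Subtype.val (e.apply_symm_apply d))

end QuaternionGroup

theorem quaternion_subgroup_count (lam : ℕ) (hlam : 3 ≤ lam) :
    Nat.card (Subgroup (QuaternionGroup (2 ^ (lam - 2)))) = 2 ^ (lam - 1) + lam - 1 := by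
  obtain ⟨k, rfl⟩ : ∃ k, lam = k + 2 := ⟨lam - 2, by omega⟩
  rw [Nat.add_sub_cancel, show k + 2 - 1 = k + 1 from rfl, QuaternionGroup.card_subgroup,
    ← pow_succ', Nat.divisors_prime_pow Nat.prime_two, Finset.card_map, Finset.card_range,
    Nat.sum_divisors_prime_pow Nat.prime_two, Nat.geomSum_eq le_rfl, Nat.div_one]
  have := Nat.one_le_two_pow (n := k + 1)
  omega
end

section
/- If G is a group of order 2^λ with λ ≥ 5 and G is not cyclic, then G has at least 3λ − 1 subgroups. -/
/-!
Induction on `λ`, starting at `λ = 4`. A noncyclic group `G` of order `2 ^ λ ≥ 16` has a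
noncyclic subgroup `M` of index 2, and two further subgroups of index 2, since a group is never
the union of two proper subgroups. Together with `G` itself these are three subgroups not
contained in `M`, so the bound for `M` gives the bound for `G`.

A noncyclic subgroup of index 2 exists because two distinct cyclic subgroups `⟨a⟩ ≠ ⟨b⟩` of
index 2 in a group of order at least 16 produce two distinct commuting involutions
`a ^ (|G| / 4)` and `b * a ^ z`; any subgroup of index 2 containing the Klein four-group they
generate is noncyclic, since a cyclic group has only one involution.

For `|G| = 16` one counts by orders: `1 + 1` subgroups of order 1 and 16, three of order 8, and
at least six of order 2 or 4. Either two noncyclic subgroups of order 8 contain at least five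
subgroups of order 4 between them, or two cyclic ones give three subgroups of order 2 generated
by involutions, next to the three subgroups of order 4 of a noncyclic subgroup of order 8.
-/

open Subgroup

section

variable {G : Type*} [Group G]

lemma Subgroup.eq_of_le_of_index_eq {H K : Subgroup G} [H.FiniteIndex] (hle : H ≤ K)
    (h : H.index = K.index) : H = K :=
  hle.eq_or_lt.resolve_right fun hlt => (index_strictAnti hlt).ne' h

section Finite

variable [Finite G]

lemma Subgroup.card_mul_two_le_of_lt {H K : Subgroup G} (h : H < K) :
    Nat.card H * 2 ≤ Nat.card K := by
  obtain ⟨c, hc⟩ := card_dvd_of_le h.le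
  have hc0 : c ≠ 0 := fun h0 => (Nat.card_pos (α := K)).ne' (by rw [hc, h0, mul_zero])
  have hc1 : c ≠ 1 := fun h1 => h.ne (eq_of_le_of_card_ge h.le (by rw [hc, h1, mul_one]))
  rw [hc]
  exact Nat.mul_le_mul_left _ (by omega)

lemma Subgroup.exists_notMem_and_notMem {H K : Subgroup G} (hH : H ≠ ⊤) (hK : K ≠ ⊤) :
    ∃ x, x ∉ H ∧ x ∉ K := by
  by_contra! hcov
  have hunion : (H : Set G) ∪ K = Set.univ :=
    Set.eq_univ_of_forall fun x => (em (x ∈ H)).elim Or.inl fun hx => Or.inr (hcov x hx)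
  have hsum : Nat.card G + ((H : Set G) ∩ K).ncard = Nat.card H + Nat.card K := by
    rw [← Set.ncard_univ, ← hunion, Set.ncard_union_add_ncard_inter]
    rfl
  have hinter : 0 < ((H : Set G) ∩ K).ncard :=
    (Set.ncard_pos (Set.toFinite _)).2 ⟨1, H.one_mem, K.one_mem⟩
  have hH2 := card_mul_two_le_of_lt hH.lt_top
  have hK2 := card_mul_two_le_of_lt hK.lt_top
  rw [card_top] at hH2 hK2
  omega

lemma card_subgroup_add_ncard_le (M : Subgroup G) {s : Set (Subgroup G)}
    (hs : ∀ K ∈ s, ¬K ≤ M) : Nat.card (Subgroup M) + s.ncard ≤ Nat.card (Subgroup G) := by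
  have hinj : Function.Injective (map M.subtype) := map_injective M.subtype_injective
  have hdisj : Disjoint (Set.range (map M.subtype)) s :=
    Set.disjoint_left.2 fun _ ⟨H, hH⟩ hK => hs _ hK (hH ▸ map_subtype_le H)
  calc Nat.card (Subgroup M) + s.ncard = (Set.range (map M.subtype) ∪ s).ncard := by
        rw [Set.ncard_union_eq hdisj, ← Nat.card_range_of_injective hinj, Nat.card_coe_set_eq]
    _ ≤ Nat.card (Subgroup G) := Set.ncard_le_card _

lemma sum_ncard_card_eq_le_card_subgroup (t : Finset ℕ) :
    ∑ n ∈ t, {H : Subgroup G | Nat.card H = n}.ncard ≤ Nat.card (Subgroup G) := by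
  classical
  have := Fintype.ofFinite (Subgroup G)
  simp only [Set.ncard_eq_toFinset_card', Set.toFinset_ofPred]
  rw [Finset.sum_card_fiberwise_eq_card_filter, Nat.card_eq_fintype_card]
  exact Finset.card_filter_le _ _

end Finite

namespace IsPGroup

variable {p : ℕ} [Fact p.Prime] [Finite G]

lemma exists_index_eq_and_le (hG : IsPGroup p G) {H : Subgroup G} (hH : H ≠ ⊤) :
    ∃ M : Subgroup G, M.index = p ∧ H ≤ M := by
  obtain ⟨n, hn⟩ := IsPGroup.iff_card.1 hG
  obtain ⟨j, hj, hHj⟩ := (Nat.dvd_prime_pow Fact.out).1 (hn ▸ card_subgroup_dvd_card H)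
  have hjn : j < n :=
    lt_of_le_of_ne hj fun h => hH <| (card_eq_iff_eq_top H).1 (by rw [hHj, hn, h])
  obtain ⟨M, hM, hHM⟩ := Sylow.exists_subgroup_card_pow_prime_le p (m := n - 1)
    (hn ▸ pow_dvd_pow p (n.sub_le 1)) H hHj (by omega)
  refine ⟨M, Nat.eq_of_mul_eq_mul_left (pow_pos (Fact.out : p.Prime).pos (n - 1)) ?_, hHM⟩
  rw [← hM, card_mul_index, hn, hM, ← pow_succ, Nat.sub_add_cancel (by omega : 1 ≤ n)]

lemma exists_index_eq_and_mem (hG : IsPGroup p G) (hnc : ¬IsCyclic G) (x : G) :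
    ∃ M : Subgroup G, M.index = p ∧ x ∈ M := by
  have hx : zpowers x ≠ ⊤ := fun h => hnc (isCyclic_iff_exists_zpowers_eq_top.2 ⟨x, h⟩)
  obtain ⟨M, hM, hxM⟩ := hG.exists_index_eq_and_le hx
  exact ⟨M, hM, hxM (mem_zpowers x)⟩

lemma three_le_ncard_index_eq (hG : IsPGroup p G) (hnc : ¬IsCyclic G) :
    3 ≤ {M : Subgroup G | M.index = p}.ncard := by
  have hne : ∀ {M : Subgroup G}, M.index = p → M ≠ ⊤ := fun hM h => by
    rw [h, index_top] at hM
    exact (Fact.out : p.Prime).one_lt.ne hM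
  obtain ⟨M₁, h₁, -⟩ := hG.exists_index_eq_and_mem hnc 1
  obtain ⟨x, hx₁, -⟩ := exists_notMem_and_notMem (hne h₁) (hne h₁)
  obtain ⟨M₂, h₂, hx₂⟩ := hG.exists_index_eq_and_mem hnc x
  obtain ⟨y, hy₁, hy₂⟩ := exists_notMem_and_notMem (hne h₁) (hne h₂)
  obtain ⟨M₃, h₃, hy₃⟩ := hG.exists_index_eq_and_mem hnc y
  have hthree : ({M₁, M₂, M₃} : Set (Subgroup G)).ncard = 3 :=
    Set.ncard_eq_three.2 ⟨M₁, M₂, M₃, fun h => hx₁ (h ▸ hx₂), fun h => hy₁ (h ▸ hy₃),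
      fun h => hy₂ (h ▸ hy₃), rfl⟩
  rw [← hthree]
  exact Set.ncard_le_ncard (by rintro _ (rfl | rfl | rfl) <;> assumption)

lemma exists_index_eq_ne (hG : IsPGroup p G) (hnc : ¬IsCyclic G) {M : Subgroup G}
    (hM : M.index = p) : ∃ M₂ M₃ : Subgroup G,
      M₂.index = p ∧ M₃.index = p ∧ M₂ ≠ M ∧ M₃ ≠ M ∧ M₂ ≠ M₃ := by
  obtain ⟨M₂, M₃, ⟨h₂, hM₂⟩, ⟨h₃, hM₃⟩, h₂₃⟩ :=
    (Set.one_lt_ncard_iff (s := {K : Subgroup G | K.index = p} \ {M})).1 <| by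
      rw [Set.ncard_sdiff_singleton_of_mem (show M ∈ {K : Subgroup G | K.index = p} from hM)]
      have := hG.three_le_ncard_index_eq hnc
      omega
  exact ⟨M₂, M₃, h₂, h₃, hM₂, hM₃, h₂₃⟩

lemma three_le_ncard_le_card_mul_eq (hG : IsPGroup p G) {M : Subgroup G} (hM : ¬IsCyclic M) :
    3 ≤ {K : Subgroup G | K ≤ M ∧ Nat.card K * p = Nat.card M}.ncard :=
  calc 3 ≤ {H : Subgroup M | H.index = p}.ncard := (hG.to_subgroup M).three_le_ncard_index_eq hM
    _ = (Subgroup.map M.subtype '' {H : Subgroup M | H.index = p}).ncard :=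
      (Set.ncard_image_of_injective _ (map_injective M.subtype_injective)).symm
    _ ≤ _ := Set.ncard_le_ncard <| by
      rintro _ ⟨H, hH, rfl⟩
      exact ⟨map_subtype_le H, by rw [card_subtype, ← hH, card_mul_index]⟩

lemma card_subgroup_add_three_le (hG : IsPGroup p G) (hnc : ¬IsCyclic G) {M : Subgroup G}
    (hM : M.index = p) : Nat.card (Subgroup M) + 3 ≤ Nat.card (Subgroup G) := by
  obtain ⟨M₂, M₃, h₂, h₃, hM₂, hM₃, h₂₃⟩ := hG.exists_index_eq_ne hnc hM
  have hp : p ≠ 1 := (Fact.out : p.Prime).one_lt.ne'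
  have hthree : ({⊤, M₂, M₃} : Set (Subgroup G)).ncard = 3 :=
    Set.ncard_eq_three.2 ⟨⊤, M₂, M₃, fun h => hp (by rw [← h₂, ← h, index_top]),
      fun h => hp (by rw [← h₃, ← h, index_top]), h₂₃, rfl⟩
  have hle := card_subgroup_add_ncard_le M (s := {⊤, M₂, M₃}) <| by
    rintro K (rfl | rfl | rfl) hle
    · exact hp (by rw [← hM, top_le_iff.1 hle, index_top])
    · exact hM₂ (eq_of_le_of_index_eq hle (h₂.trans hM.symm))
    · exact hM₃ (eq_of_le_of_index_eq hle (h₃.trans hM.symm))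
  omega

end IsPGroup

lemma exists_subgroup_card_le_four_of_commute {u v : G} (huv : Commute u v) (hu : u ^ 2 = 1)
    (hv : v ^ 2 = 1) : ∃ K : Subgroup G, u ∈ K ∧ v ∈ K ∧ Nat.card K ≤ 4 := by
  classical
  have huu : u * u = 1 := by rw [← sq, hu]
  have hvv : v * v = 1 := by rw [← sq, hv]
  have hvu : v * u = u * v := huv.eq.symm
  have huu' (x : G) : u * (u * x) = x := by rw [← mul_assoc, huu, one_mul]
  have hvu' (x : G) : v * (u * x) = u * (v * x) := huv.symm.left_comm x
  let K : Subgroup G :=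
    { carrier := ↑({1, u, v, u * v} : Finset G)
      one_mem' := by simp
      mul_mem' := by
        intro a b ha hb
        simp only [Finset.coe_insert, Finset.coe_singleton, Set.mem_insert_iff,
          Set.mem_singleton_iff] at ha hb ⊢
        rcases ha with ha | ha | ha | ha <;> rcases hb with hb | hb | hb | hb <;> subst a b <;>
          simp [mul_assoc, huu, hvv, hvu, huu', hvu']
      inv_mem' := by
        intro a ha
        simp only [Finset.coe_insert, Finset.coe_singleton, Set.mem_insert_iff,
          Set.mem_singleton_iff] at ha ⊢
        rcases ha with ha | ha | ha | ha <;> subst a <;>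
          simp [inv_eq_of_mul_eq_one_right huu, inv_eq_of_mul_eq_one_right hvv, hvu] }
  exact ⟨K, by simp [K], by simp [K], (Nat.card_eq_finsetCard _).trans_le Finset.card_le_four⟩

section Involutions

variable [Finite G]

lemma IsCyclic.eq_of_orderOf_eq_two [IsCyclic G] {u v : G} (hu : orderOf u = 2)
    (hv : orderOf v = 2) : u = v := by
  classical
  have := Fintype.ofFinite G
  by_contra huv
  have h1u : (1 : G) ≠ u := fun h => by simp [← h] at hu
  have h1v : (1 : G) ≠ v := fun h => by simp [← h] at hv
  have hsub : ({1, u, v} : Finset G) ⊆ ({a | a ^ 2 = 1} : Finset G) := by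
    simpa [Finset.insert_subset_iff] using ⟨hu ▸ pow_orderOf_eq_one u, hv ▸ pow_orderOf_eq_one v⟩
  have hle := (Finset.card_le_card hsub).trans (IsCyclic.card_pow_eq_one_le two_pos)
  rw [Finset.card_eq_three.2 ⟨1, u, v, h1u, h1v, huv, rfl⟩] at hle
  omega

lemma eq_of_zpowers_eq_of_orderOf_eq_two {x y : G} (hx : orderOf x = 2) (hy : orderOf y = 2)
    (h : zpowers x = zpowers y) : x = y :=
  congrArg Subtype.val <| IsCyclic.eq_of_orderOf_eq_two (G := zpowers x)
    (u := ⟨x, mem_zpowers x⟩) (v := ⟨y, h ▸ mem_zpowers y⟩)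
    (by rwa [orderOf_mk]) (by rwa [orderOf_mk])

lemma three_le_ncard_card_eq_two_of_commute {u v : G} (huv : Commute u v) (hu : orderOf u = 2)
    (hv : orderOf v = 2) (hne : u ≠ v) : 3 ≤ {H : Subgroup G | Nat.card H = 2}.ncard := by
  have hu2 : u ^ 2 = 1 := hu ▸ pow_orderOf_eq_one u
  have hv2 : v ^ 2 = 1 := hv ▸ pow_orderOf_eq_one v
  have hu1 : u ≠ 1 := fun h => by simp [h] at hu
  have hv1 : v ≠ 1 := fun h => by simp [h] at hv
  have huv1 : u * v ≠ 1 := fun h => hne <| by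
    rw [← inv_eq_of_mul_eq_one_right h, eq_inv_iff_mul_eq_one, ← sq, hu2]
  have huv2 : orderOf (u * v) = 2 :=
    orderOf_eq_prime (by rw [huv.mul_pow, hu2, hv2, one_mul]) huv1
  have hthree : ({zpowers u, zpowers v, zpowers (u * v)} : Set (Subgroup G)).ncard = 3 := by
    refine Set.ncard_eq_three.2 ⟨_, _, _, fun h => hne ?_, fun h => hv1 ?_, fun h => hu1 ?_, rfl⟩
    · exact eq_of_zpowers_eq_of_orderOf_eq_two hu hv h
    · simpa using (eq_of_zpowers_eq_of_orderOf_eq_two hu huv2 h).symm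
    · simpa using (eq_of_zpowers_eq_of_orderOf_eq_two hv huv2 h).symm
  rw [← hthree]
  refine Set.ncard_le_ncard ?_
  rintro _ (rfl | rfl | rfl) <;> simp [Nat.card_zpowers, hu, hv, huv2]

lemma IsPGroup.exists_index_eq_two_not_isCyclic_of_commute (hG : IsPGroup 2 G)
    (hcard : 4 < Nat.card G) {u v : G} (huv : Commute u v) (hu : orderOf u = 2)
    (hv : orderOf v = 2) (hne : u ≠ v) : ∃ M : Subgroup G, M.index = 2 ∧ ¬IsCyclic M := by
  obtain ⟨K, huK, hvK, hK⟩ := exists_subgroup_card_le_four_of_commute huv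
    (hu ▸ pow_orderOf_eq_one u) (hv ▸ pow_orderOf_eq_one v)
  have hKtop : K ≠ ⊤ := fun h => by rw [h, card_top] at hK; omega
  obtain ⟨M, hM, hKM⟩ := hG.exists_index_eq_and_le hKtop
  refine ⟨M, hM, fun _ => hne ?_⟩
  exact congrArg Subtype.val <| IsCyclic.eq_of_orderOf_eq_two (G := M)
    (u := ⟨u, hKM huK⟩) (v := ⟨v, hKM hvK⟩) (by rwa [orderOf_mk]) (by rwa [orderOf_mk])

end Involutions

lemma exists_odd_of_zpow_eq_sq {a b : G} {q : ℕ} (hq : 0 < q) (ha : orderOf a = 4 * q)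
    (hb : orderOf b = 4 * q) {k : ℤ} (hk : a ^ k = b ^ 2) : ∃ s : ℤ, Odd s ∧ k = 2 * s := by
  have hk2 : 2 ∣ k := by
    have h : a ^ (k * (2 * q : ℕ)) = 1 := by
      rw [zpow_mul, hk, zpow_natCast, ← pow_mul, show 2 * (2 * q) = orderOf b by omega,
        pow_orderOf_eq_one]
    obtain ⟨d, hd⟩ := orderOf_dvd_iff_zpow_eq_one.2 h
    have h2q : ((2 * q : ℕ) : ℤ) ≠ 0 := by positivity
    exact ⟨d, mul_right_cancel₀ h2q (by rw [hd, ha]; push_cast; ring)⟩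
  obtain ⟨s, rfl⟩ := hk2
  refine ⟨s, Int.not_even_iff_odd.1 fun ⟨c, hc⟩ => ?_, rfl⟩
  have h : b ^ (2 * q) = 1 := by
    rw [pow_mul, ← hk, ← zpow_natCast, ← zpow_mul, ← orderOf_dvd_iff_zpow_eq_one, ha, hc]
    exact ⟨c, by push_cast; ring⟩
  have := Nat.le_of_dvd (by positivity) (hb ▸ orderOf_dvd_of_pow_eq_one h)
  omega

lemma exists_eq_one_add_of_zpow_eq_conj {a b : G} {r : ℕ} (ha : orderOf a = 2 * r)
    (hab : Commute b (a ^ 2)) {m : ℤ} (hm : a ^ m = b⁻¹ * a * b) : ∃ e : ℤ, m = 1 + r * e := by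
  have hsq : (b⁻¹ * a * b) ^ 2 = a ^ 2 := by
    have hconj : b⁻¹ * a ^ 2 * b = a ^ 2 := by rw [mul_assoc, ← hab.eq, inv_mul_cancel_left]
    rw [← hconj, sq, sq]
    group
  have h : a ^ (m * 2 - 2) = 1 := by
    rw [zpow_sub, zpow_mul, hm, zpow_ofNat, zpow_ofNat, hsq, mul_inv_cancel]
  rw [← orderOf_dvd_iff_zpow_eq_one, ha] at h
  obtain ⟨e, he⟩ := h
  exact ⟨e, by push_cast at he; linarith⟩

lemma exists_commute_orderOf_eq_two_of_index_eq_two [Finite G] {a b : G}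
    (ha : (zpowers a).index = 2) (hb : (zpowers b).index = 2) (hab : zpowers a ≠ zpowers b)
    (h8 : 8 ∣ orderOf a) : ∃ u v : G, Commute u v ∧ orderOf u = 2 ∧ orderOf v = 2 ∧ u ≠ v := by
  obtain ⟨q, hq⟩ := h8
  have hq0 : 0 < q := by have := orderOf_pos a; omega
  have hba : orderOf b = orderOf a := by
    have h := (card_mul_index (zpowers b)).trans (card_mul_index (zpowers a)).symm
    rwa [ha, hb, Nat.card_zpowers, Nat.card_zpowers, Nat.mul_left_inj two_ne_zero] at h
  have hbo : b ∉ zpowers a := fun h =>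
    hab (eq_of_le_of_index_eq (zpowers_le.2 h) (hb.trans ha.symm)).symm
  obtain ⟨k, hk⟩ := mem_zpowers_iff.1 (sq_mem_of_index_two ha b)
  obtain ⟨l, hl⟩ := mem_zpowers_iff.1 (sq_mem_of_index_two hb a)
  obtain ⟨m, hm⟩ := mem_zpowers_iff.1 <| by
    simpa using (normal_of_index_eq_two ha).conj_mem a (mem_zpowers a) b⁻¹
  have hcomm : Commute b (a ^ 2) := hl ▸ (Commute.refl b).zpow_right l
  obtain ⟨s, ⟨c, rfl⟩, rfl⟩ :=
    exists_odd_of_zpow_eq_sq (q := 2 * q) (by omega) (by omega) (by omega) hk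
  obtain ⟨e, rfl⟩ := exists_eq_one_add_of_zpow_eq_conj (r := 4 * q) (by omega) hcomm hm
  -- `(b * a ^ z) ^ 2 = a ^ (2 * (2 * c + 1) + (2 + 4 * q * e) * z)`, and for this `z`
  -- the exponent is `-8 * q * (e * (c + 1) + q * e ^ 2)`
  set z : ℤ := -(2 * c + 1 + 2 * q * e)
  have hv : b * a ^ z ∉ zpowers a := fun h =>
    hbo (by simpa using mul_mem h (zpow_mem (mem_zpowers a) (-z)))
  refine ⟨a ^ (4 * q), b * a ^ z, ?_, ?_, ?_, ?_⟩
  · rw [show 4 * q = 2 * (2 * q) by ring, pow_mul]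
    exact (hcomm.pow_right _).symm.mul_right
      (Commute.zpow_right (Commute.pow_left (Commute.pow_left (Commute.refl a) 2) _) _)
  · refine orderOf_eq_prime ?_ fun h => ?_
    · rw [← pow_mul, show 4 * q * 2 = orderOf a by omega, pow_orderOf_eq_one]
    · exact pow_ne_one_of_lt_orderOf (by omega) (by omega) h
  · refine orderOf_eq_prime ?_ fun h => hv (h ▸ one_mem _)
    have hconj : b⁻¹ * a ^ z * b = a ^ ((1 + ((4 * q : ℕ) : ℤ) * e) * z) := by
      rw [zpow_mul, hm]
      simpa using (conj_zpow (a := b⁻¹) (b := a) (i := z)).symm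
    have hsq : b * b = a ^ (2 * (2 * c + 1)) := by rw [← sq, ← hk]
    calc (b * a ^ z) ^ 2 = (b * b) * (b⁻¹ * a ^ z * b) * a ^ z := by rw [sq]; group
      _ = a ^ (((8 * q : ℕ) : ℤ) * (-(e * (c + 1) + q * e ^ 2))) := by
        rw [hconj, hsq, ← zpow_add, ← zpow_add]
        congr 1
        push_cast
        ring
      _ = 1 := by rw [zpow_mul, ← hq, zpow_natCast, pow_orderOf_eq_one, one_zpow]
  · exact fun h => hv (h ▸ pow_mem (mem_zpowers a) _)

section TwoGroups

variable [Finite G] {n : ℕ}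

lemma exists_commute_orderOf_eq_two_of_isCyclic (hG : Nat.card G = 2 ^ n) (hn : 4 ≤ n)
    {M₁ M₂ : Subgroup G} (h₁ : M₁.index = 2) (h₂ : M₂.index = 2) (hne : M₁ ≠ M₂)
    (hc₁ : IsCyclic M₁) (hc₂ : IsCyclic M₂) :
    ∃ u v : G, Commute u v ∧ orderOf u = 2 ∧ orderOf v = 2 ∧ u ≠ v := by
  obtain ⟨a, rfl⟩ := M₁.isCyclic_iff_exists_zpowers_eq_top.1 hc₁
  obtain ⟨b, rfl⟩ := M₂.isCyclic_iff_exists_zpowers_eq_top.1 hc₂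
  refine exists_commute_orderOf_eq_two_of_index_eq_two h₁ h₂ hne ⟨2 ^ (n - 4), ?_⟩
  have h := card_mul_index (zpowers a)
  rw [Nat.card_zpowers, h₁, hG, show n = n - 4 + 4 by omega, pow_add] at h
  omega

lemma exists_index_eq_two_not_isCyclic (hG : Nat.card G = 2 ^ n) (hn : 4 ≤ n)
    (hnc : ¬IsCyclic G) : ∃ M : Subgroup G, M.index = 2 ∧ ¬IsCyclic M := by
  have hG' : IsPGroup 2 G := IsPGroup.of_card hG
  obtain ⟨M₁, h₁, -⟩ := hG'.exists_index_eq_and_mem hnc 1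
  obtain ⟨M₂, -, h₂, -, hne, -⟩ := hG'.exists_index_eq_ne hnc h₁
  by_cases hc₁ : IsCyclic M₁
  · by_cases hc₂ : IsCyclic M₂
    · obtain ⟨u, v, huv, hu, hv, hne'⟩ :=
        exists_commute_orderOf_eq_two_of_isCyclic hG hn h₁ h₂ hne.symm hc₁ hc₂
      refine hG'.exists_index_eq_two_not_isCyclic_of_commute ?_ huv hu hv hne'
      calc 4 < 2 ^ 4 := by norm_num
        _ ≤ Nat.card G := hG ▸ Nat.pow_le_pow_right two_pos hn
    · exact ⟨M₂, h₂, hc₂⟩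
  · exact ⟨M₁, h₁, hc₁⟩

lemma five_le_ncard_card_mul_four_eq (hG : IsPGroup 2 G) {M M' : Subgroup G} (hM : M.index = 2)
    (hM' : M'.index = 2) (hne : M ≠ M') (hc : ¬IsCyclic M) (hc' : ¬IsCyclic M') :
    5 ≤ {K : Subgroup G | Nat.card K * 4 = Nat.card G}.ncard := by
  set A := {K : Subgroup G | K ≤ M ∧ Nat.card K * 2 = Nat.card M}
  set B := {K : Subgroup G | K ≤ M' ∧ Nat.card K * 2 = Nat.card M'}
  have hA : 3 ≤ A.ncard := hG.three_le_ncard_le_card_mul_eq hc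
  have hB : 3 ≤ B.ncard := hG.three_le_ncard_le_card_mul_eq hc'
  have hAB : (A ∩ B).ncard ≤ 1 := by
    have hlt : M ⊓ M' < M := inf_le_left.lt_of_ne fun h =>
      hne (eq_of_le_of_index_eq (h ▸ inf_le_right) (hM.trans hM'.symm))
    refine (Set.ncard_le_ncard (t := {M ⊓ M'}) ?_).trans (Set.ncard_singleton _).le
    rintro K ⟨⟨hKM, hK⟩, hKM', -⟩
    exact eq_of_le_of_card_ge (le_inf hKM hKM') (by have := card_mul_two_le_of_lt hlt; omega)
  have hsub : A ∪ B ⊆ {K : Subgroup G | Nat.card K * 4 = Nat.card G} := by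
    rintro K (⟨-, hK⟩ | ⟨-, hK⟩)
    · have := card_mul_index M; rw [hM] at this; show Nat.card K * 4 = Nat.card G; omega
    · have := card_mul_index M'; rw [hM'] at this; show Nat.card K * 4 = Nat.card G; omega
  have := Set.ncard_union_add_ncard_inter A B
  have := Set.ncard_le_ncard hsub
  omega

end TwoGroups

lemma six_le_ncard_card_eq_two_add_ncard_card_eq_four (hG : Nat.card G = 2 ^ 4)
    (hnc : ¬IsCyclic G) :
    6 ≤ {H : Subgroup G | Nat.card H = 2}.ncard + {H : Subgroup G | Nat.card H = 4}.ncard := by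
  have : Finite G := Nat.finite_of_card_ne_zero (by rw [hG]; norm_num)
  have hG' : IsPGroup 2 G := IsPGroup.of_card hG
  obtain ⟨M, hM, hMc⟩ := exists_index_eq_two_not_isCyclic hG le_rfl hnc
  obtain ⟨M₂, M₃, h₂, h₃, hM₂, hM₃, h₂₃⟩ := hG'.exists_index_eq_ne hnc hM
  have hcard4 :
      {K : Subgroup G | Nat.card K * 4 = Nat.card G} = {H : Subgroup G | Nat.card H = 4} := by
    ext K
    simp only [Set.mem_ofPred_eq, hG]
    omega
  have h2 : 0 < {H : Subgroup G | Nat.card H = 2}.ncard := by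
    obtain ⟨K, hK⟩ := Sylow.exists_subgroup_card_pow_prime 2 (n := 1) (by rw [hG]; norm_num)
    exact (Set.ncard_pos (Set.toFinite _)).2 ⟨K, hK⟩
  by_cases hc₂ : IsCyclic M₂
  · by_cases hc₃ : IsCyclic M₃
    · obtain ⟨u, v, huv, hu, hv, hne⟩ :=
        exists_commute_orderOf_eq_two_of_isCyclic hG le_rfl h₂ h₃ h₂₃ hc₂ hc₃
      have h2' := three_le_ncard_card_eq_two_of_commute huv hu hv hne
      have h4 := (hG'.three_le_ncard_le_card_mul_eq hMc).trans <|
        Set.ncard_le_ncard (t := {H : Subgroup G | Nat.card H = 4}) fun K ⟨_, hK⟩ => by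
          have := card_mul_index M
          rw [hM, hG] at this
          show Nat.card K = 4
          omega
      omega
    · have := hcard4 ▸ five_le_ncard_card_mul_four_eq hG' hM h₃ hM₃.symm hMc hc₃
      omega
  · have := hcard4 ▸ five_le_ncard_card_mul_four_eq hG' hM h₂ hM₂.symm hMc hc₂
    omega

lemma eleven_le_card_subgroup (hG : Nat.card G = 2 ^ 4) (hnc : ¬IsCyclic G) :
    11 ≤ Nat.card (Subgroup G) := by
  have : Finite G := Nat.finite_of_card_ne_zero (by rw [hG]; norm_num)
  have hsum := sum_ncard_card_eq_le_card_subgroup (G := G) {1, 2, 4, 8, 16}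
  rw [Finset.sum_insert (by decide), Finset.sum_insert (by decide), Finset.sum_insert (by decide),
    Finset.sum_insert (by decide), Finset.sum_singleton] at hsum
  have h1 : 0 < {H : Subgroup G | Nat.card H = 1}.ncard :=
    (Set.ncard_pos (Set.toFinite _)).2 ⟨⊥, card_bot⟩
  have h16 : 0 < {H : Subgroup G | Nat.card H = 16}.ncard :=
    (Set.ncard_pos (Set.toFinite _)).2 ⟨⊤, by rw [Set.mem_ofPred_eq, card_top, hG]; rfl⟩
  have hindex : {M : Subgroup G | M.index = 2} = {H : Subgroup G | Nat.card H = 8} := by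
    ext H
    have := card_mul_index H
    rw [hG] at this
    constructor <;> intro h <;> simp only [Set.mem_ofPred_eq] at h ⊢ <;> rw [h] at this <;> omega
  have h8 := hindex ▸ (IsPGroup.of_card hG).three_le_ncard_index_eq hnc
  have h24 := six_le_ncard_card_eq_two_add_ncard_card_eq_four hG hnc
  omega

theorem three_mul_sub_one_le_card_subgroup {n : ℕ} (hn : 4 ≤ n) (hG : Nat.card G = 2 ^ n)
    (hnc : ¬IsCyclic G) : 3 * n - 1 ≤ Nat.card (Subgroup G) := by
  induction n, hn using Nat.le_induction generalizing G with
  | base => exact eleven_le_card_subgroup hG hnc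
  | succ n hn ih =>
    have : Finite G := Nat.finite_of_card_ne_zero (by rw [hG]; positivity)
    obtain ⟨M, hM, hMc⟩ := exists_index_eq_two_not_isCyclic hG (by omega) hnc
    have hcardM : Nat.card M = 2 ^ n := by
      have := card_mul_index M
      rw [hM, hG, pow_succ] at this
      omega
    have := (IsPGroup.of_card hG).card_subgroup_add_three_le hnc hM
    have := ih hcardM hMc
    omega

end

theorem noncyclic_two_group_subgroup_lower_bound
    (lam : ℕ) (hlam : 5 ≤ lam)
    (G : Type*) [Group G] (hcard : Nat.card G = 2 ^ lam)
    (hnc : ¬ IsCyclic G) :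
    3 * lam - 1 ≤ Nat.card (Subgroup G) :=
  three_mul_sub_one_le_card_subgroup (by omega) hcard hnc
end

section
/- If a 2-group of order at least 8 has a unique subgroup of order 2, then it is cyclic or generalized quaternion. -/
/-!
Let `a` have maximal order `2 ^ m` and `A = ⟨a⟩`. The unique involution lies in `A`, so no
`x ∉ A` squares to `1`. An element `b` commuting with `a` lies in `A`: inductively
`b ^ 2 = a ^ s`, `s` is even because `b` has order at most `2 ^ m`, and `b * a ^ (-s / 2)` squares
to `1`. Hence an abelian `G` is cyclic, and otherwise `A` is its own centralizer.

For `b ∉ A` normalizing `A` with `b ^ 2 ∈ A`, write `b a b⁻¹ = a ^ k` and `b ^ 2 = a ^ t`. As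
`(b a ^ s) ^ 2 = a ^ (t + s (k + 1)) ≠ 1` for all `s`, comparing the `2`-parts of `k + 1` and
`k - 1` forces `k ≡ -1 [ZMOD 2 ^ m]`; then `b` inverts `b ^ 2`, which is therefore the involution
`a ^ 2 ^ (m - 1)`. Since `-1` is not a square modulo `4`, no square inverts `a`, so all of `N(A)`
squares into `A` and `N(A) = A ∪ bA`. Finally `A` is normal: for `m = 2` every square lies in
`A`; for `m ≥ 3` an element of `N(N(A)) \ N(A)` would conjugate `a` into `bA`, whose elements
have order `4`. So `A` has index `2`, and `a`, `b` satisfy the relations of the quaternion group.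
-/

open Subgroup

theorem two_pow_dvd_add_one_of_forall_not_dvd {m : ℕ} {k t : ℤ} (hsub : 2 ^ m ∣ t * (k - 1))
    (hne : ¬ 2 ^ m ∣ k - 1) (hadd : ∀ s, ¬ 2 ^ m ∣ t + s * (k + 1)) : 2 ^ m ∣ k + 1 := by
  -- with `2 ^ α = gcd (k + 1) (2 ^ m)` and `2 ^ β = gcd (k - 1) (2 ^ m)`, Bézout turns `hadd`
  -- into `2 ^ α ∤ t` and `hsub` into `2 ^ m ∣ t * 2 ^ β`, whence `m < α + β`
  have hgcd : ∀ j : ℤ, ∃ e ≤ m, (j.gcd (2 ^ m) : ℤ) = 2 ^ e := fun j => by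
    obtain ⟨e, he, h⟩ := (Nat.dvd_prime_pow Nat.prime_two).1
      (Int.natCast_dvd_natCast.1 (by simpa using Int.gcd_dvd_right j (2 ^ m)))
    exact ⟨e, he, by simp [h]⟩
  obtain ⟨α, hαm, hα⟩ := hgcd (k + 1)
  obtain ⟨β, hβm, hβ⟩ := hgcd (k - 1)
  have hα_t : ¬ (2 : ℤ) ^ α ∣ t := by
    rintro ⟨r, rfl⟩
    apply hadd (-(r * (k + 1).gcdA (2 ^ m)))
    rw [← hα, Int.gcd_eq_gcd_ab]
    exact ⟨r * (k + 1).gcdB (2 ^ m), by ring⟩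
  have hβ_t : (2 : ℤ) ^ m ∣ t * 2 ^ β := by
    rw [← hβ, Int.gcd_eq_gcd_ab, mul_add, ← mul_assoc]
    exact dvd_add (dvd_mul_of_dvd_left hsub _) ⟨t * (k - 1).gcdB (2 ^ m), by ring⟩
  have hβm' : β < m := by
    by_contra! h
    exact hne ((pow_dvd_pow 2 h).trans (hβ ▸ Int.gcd_dvd_left _ _))
  -- `k + 1` and `k - 1` differ by `2`, so they are not both divisible by `4`
  have hmin : α ≤ 1 ∨ β ≤ 1 := by
    by_contra! h
    have h1 : (2 : ℤ) ^ 2 ∣ k + 1 := (pow_dvd_pow 2 h.1).trans (hα ▸ Int.gcd_dvd_left _ _)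
    have h2 : (2 : ℤ) ^ 2 ∣ k - 1 := (pow_dvd_pow 2 h.2).trans (hβ ▸ Int.gcd_dvd_left _ _)
    norm_num at h1 h2
    omega
  have hsum : m < α + β := by
    by_contra! h
    apply hα_t
    have : (2 : ℤ) ^ (m - β) ∣ t := by
      rw [← mul_dvd_mul_iff_right (pow_ne_zero β two_ne_zero), ← pow_add,
        Nat.sub_add_cancel hβm'.le]
      exact hβ_t
    exact (pow_dvd_pow 2 (by omega)).trans this
  obtain rfl : α = m := by omega
  exact hα ▸ Int.gcd_dvd_left _ _

section

variable {G : Type*} [Group G]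

theorem subsingleton_orderOf_eq_two_of_existsUnique (h : ∃! H : Subgroup G, Nat.card H = 2) :
    {x : G | orderOf x = 2}.Subsingleton := by
  obtain ⟨H, -, hH⟩ := h
  have hzpowers : ∀ x : G, orderOf x = 2 → zpowers x = H := fun x hx =>
    hH _ (show Nat.card (zpowers x) = 2 by rw [Nat.card_zpowers, hx])
  intro x (hx : orderOf x = 2) y (hy : orderOf y = 2)
  obtain ⟨k, rfl⟩ := mem_zpowers_iff.1 (hzpowers y hy ▸ hzpowers x hx ▸ mem_zpowers x)
  rw [← zpow_mod_orderOf, hy] at hx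
  rw [← zpow_mod_orderOf, hy]
  rcases Int.emod_two_eq_zero_or_one k with h | h <;> simp_all

theorem IsPGroup.orderOf_dvd_of_le {p : ℕ} [Fact p.Prime] (hG : IsPGroup p G) {x y : G}
    (h : orderOf x ≤ orderOf y) : orderOf x ∣ orderOf y := by
  obtain ⟨i, hi⟩ := IsPGroup.iff_orderOf.1 hG x
  obtain ⟨j, hj⟩ := IsPGroup.iff_orderOf.1 hG y
  rw [hi, hj] at h ⊢
  exact Nat.pow_dvd_pow p ((Nat.pow_le_pow_iff_right (Fact.out : p.Prime).one_lt).1 h)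

theorem mem_normalizer_zpowers_iff [Finite G] {a g : G} :
    g ∈ normalizer (zpowers a : Set G) ↔ g * a * g⁻¹ ∈ zpowers a := by
  refine ⟨fun hg => (mem_normalizer_iff.1 hg a).1 (mem_zpowers a), fun hg => ?_⟩
  refine mem_normalizer_fintype fun x hx => ?_
  obtain ⟨k, rfl⟩ := mem_zpowers_iff.1 hx
  rw [SetLike.mem_coe, ← conj_zpow]
  exact zpow_mem hg k

theorem Subgroup.normal_of_forall_sq_mem {H : Subgroup G} (hH : ∀ x : G, x ^ 2 ∈ H) :
    H.Normal where
  conj_mem h hh g := by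
    have : g * h * g⁻¹ = (g * h) ^ 2 * h⁻¹ * g⁻¹ ^ 2 := by simp only [sq]; group
    rw [this]
    exact mul_mem (mul_mem (hH _) (inv_mem hh)) (hH _)

theorem sq_conj_ne_inv {a d : G} {m : ℕ} (ha : orderOf a = 2 ^ m) (hm : 2 ≤ m)
    (hd : d * a * d⁻¹ ∈ zpowers a) : d ^ 2 * a * (d ^ 2)⁻¹ ≠ a⁻¹ := by
  obtain ⟨j, hj⟩ := mem_zpowers_iff.1 hd
  have hjj : d ^ 2 * a * (d ^ 2)⁻¹ = a ^ (j * j) := by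
    rw [zpow_mul, hj, conj_zpow, hj, sq]
    group
  rw [hjj]
  intro hinv
  have h4 : (2 : ℤ) ^ 2 ∣ j * j + 1 := by
    refine (pow_dvd_pow 2 hm).trans ?_
    rw [← Nat.cast_two, ← Nat.cast_pow, ← ha, orderOf_dvd_iff_zpow_eq_one, zpow_add_one, hinv,
      inv_mul_cancel]
  have := (ZMod.intCast_zmod_eq_zero_iff_dvd (j * j + 1) 4).2 (by simpa using h4)
  push_cast at this
  generalize (j : ZMod 4) = x at this
  revert x
  decide

section Involution

variable [Finite G]

theorem mem_zpowers_of_sq_eq_one (h2 : {x : G | orderOf x = 2}.Subsingleton) {a x : G}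
    (ha : 2 ∣ orderOf a) (hx : x ^ 2 = 1) : x ∈ zpowers a := by
  rcases eq_or_ne x 1 with rfl | hx1
  · exact one_mem _
  rw [h2 (orderOf_eq_prime hx hx1) (orderOf_pow_orderOf_div (orderOf_pos a).ne' ha)]
  exact pow_mem (mem_zpowers a) _

theorem mem_zpowers_of_commute (hG : IsPGroup 2 G) (h2 : {x : G | orderOf x = 2}.Subsingleton)
    {a b : G} (hab : Commute a b) (hle : orderOf b ≤ orderOf a) : b ∈ zpowers a := by
  obtain ⟨n, hn⟩ := hG b
  induction n generalizing b with
  | zero => rw [pow_zero, pow_one] at hn; exact hn ▸ one_mem _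
  | succ n ih =>
    rcases eq_or_ne b 1 with rfl | hb1
    · exact one_mem _
    obtain ⟨s, hs⟩ := mem_zpowers_iff.1 <| ih (hab.pow_right 2)
      ((Nat.le_of_dvd (orderOf_pos b) (orderOf_pow_dvd 2)).trans hle)
      (by rw [← pow_mul, ← pow_succ']; exact hn)
    have hdvd : orderOf b ∣ orderOf a := hG.orderOf_dvd_of_le hle
    obtain ⟨q, hq⟩ : 2 ∣ orderOf a := (hG.dvd_orderOf hb1).trans hdvd
    -- `a ^ s = b ^ 2` has order dividing `q = orderOf a / 2`, so `s` is even
    obtain ⟨r, rfl⟩ : Even s := by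
      have : a ^ (s * q) = 1 := by
        rw [zpow_mul, hs, zpow_natCast, ← pow_mul, ← hq, orderOf_dvd_iff_pow_eq_one.1 hdvd]
      rw [← orderOf_dvd_iff_zpow_eq_one, hq, Nat.cast_mul, Nat.cast_two,
        mul_dvd_mul_iff_right (by have := orderOf_pos a; omega)] at this
      exact even_iff_two_dvd.2 this
    have hsq : (b * a ^ (-r)) ^ 2 = 1 := by
      rw [(hab.symm.zpow_right (-r)).mul_pow, ← hs]
      group
    simpa using mul_mem (mem_zpowers_of_sq_eq_one h2 ⟨q, hq⟩ hsq) (zpow_mem (mem_zpowers a) r)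

theorem conj_eq_inv_of_sq_mem_zpowers (h2 : {x : G | orderOf x = 2}.Subsingleton) {a b : G}
    {m : ℕ} (ha : orderOf a = 2 ^ m) (hC : ∀ g, Commute a g → g ∈ zpowers a)
    (hb : b ∉ zpowers a) (hconj : b * a * b⁻¹ ∈ zpowers a) (hsq : b ^ 2 ∈ zpowers a) :
    b * a * b⁻¹ = a⁻¹ := by
  obtain ⟨k, hk⟩ := mem_zpowers_iff.1 hconj
  obtain ⟨t, ht⟩ := mem_zpowers_iff.1 hsq
  have hpow : ∀ s : ℤ, b * a ^ s * b⁻¹ = a ^ (k * s) := fun s => by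
    rw [← conj_zpow, ← hk, ← zpow_mul]
  have hdvd : ∀ s : ℤ, a ^ s = 1 ↔ 2 ^ m ∣ s := fun s => by
    rw [← orderOf_dvd_iff_zpow_eq_one, ha, Nat.cast_pow, Nat.cast_two]
  have hsub : 2 ^ m ∣ t * (k - 1) := by
    rw [← hdvd, mul_sub, mul_one, zpow_sub, mul_inv_eq_one, mul_comm, ← hpow, ht]
    group
  have hne : ¬ 2 ^ m ∣ k - 1 := by
    rw [← hdvd, zpow_sub_one, mul_inv_eq_one, hk]
    exact fun h => hb (hC b (mul_inv_eq_iff_eq_mul.1 h).symm)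
  have hadd : ∀ s : ℤ, ¬ 2 ^ m ∣ t + s * (k + 1) := by
    intro s h
    have hm : m ≠ 0 := by rintro rfl; exact hne (one_dvd _)
    have hsq' : (b * a ^ s) ^ 2 = 1 :=
      calc (b * a ^ s) ^ 2 = b * a ^ s * b⁻¹ * b ^ 2 * a ^ s := by rw [sq, sq]; group
        _ = a ^ (t + s * (k + 1)) := by rw [hpow, ← ht, ← zpow_add, ← zpow_add]; ring_nf
        _ = 1 := (hdvd _).2 h
    apply hb
    simpa using mul_mem (mem_zpowers_of_sq_eq_one h2 (ha ▸ dvd_pow_self 2 hm) hsq')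
      (zpow_mem (mem_zpowers a) (-s))
  rw [← hk, ← mul_eq_one_iff_eq_inv, ← zpow_add_one, hdvd]
  exact two_pow_dvd_add_one_of_forall_not_dvd hsub hne hadd

theorem sq_eq_pow_orderOf_div_two_of_conj_eq_inv (h2 : {x : G | orderOf x = 2}.Subsingleton)
    {a b : G} (ha : 2 ∣ orderOf a) (hb : b ∉ zpowers a) (hsq : b ^ 2 ∈ zpowers a)
    (hinv : b * a * b⁻¹ = a⁻¹) : b ^ 2 = a ^ (orderOf a / 2) := by
  obtain ⟨t, ht⟩ := mem_zpowers_iff.1 hsq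
  have hinv2 : b ^ 2 = (b ^ 2)⁻¹ :=
    calc b ^ 2 = b * a ^ t * b⁻¹ := by rw [ht]; group
      _ = (b ^ 2)⁻¹ := by rw [← conj_zpow, hinv, inv_zpow, ht]
  have hb2 : b ^ 2 ≠ 1 := fun h => hb (mem_zpowers_of_sq_eq_one h2 ha h)
  exact h2 (orderOf_eq_prime (by rw [sq]; exact mul_eq_one_iff_eq_inv.2 hinv2) hb2)
    (orderOf_pow_orderOf_div (orderOf_pos a).ne' ha)

theorem sq_mem_zpowers_of_mem_normalizer (hG : IsPGroup 2 G)
    (h2 : {x : G | orderOf x = 2}.Subsingleton) {a g : G} {m : ℕ} (ha : orderOf a = 2 ^ m)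
    (hm : 2 ≤ m) (hC : ∀ x, Commute a x → x ∈ zpowers a)
    (hg : g ∈ normalizer (zpowers a : Set G)) : g ^ 2 ∈ zpowers a := by
  obtain ⟨n, hn⟩ := hG g
  induction n generalizing g with
  | zero => rw [pow_zero, pow_one] at hn; simp [hn]
  | succ n ih =>
    by_contra hg2
    have hg2N := pow_mem hg 2
    exact sq_conj_ne_inv ha hm (mem_normalizer_zpowers_iff.1 hg)
      (conj_eq_inv_of_sq_mem_zpowers h2 ha hC hg2 (mem_normalizer_zpowers_iff.1 hg2N)
        (ih hg2N (by rw [← pow_mul, ← pow_succ']; exact hn)))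

theorem normalizer_zpowers_eq_top (hG : IsPGroup 2 G)
    (h2 : {x : G | orderOf x = 2}.Subsingleton) {a : G} {m : ℕ} (ha : orderOf a = 2 ^ m)
    (hm : 3 ≤ m) (hC : ∀ x, Commute a x → x ∈ zpowers a) :
    normalizer (zpowers a : Set G) = ⊤ := by
  set N := normalizer (zpowers a : Set G)
  by_contra hN
  obtain ⟨g, hgN', hgN⟩ := SetLike.exists_of_lt
    (Group.normalizerCondition_of_isNilpotent (h := hG.isNilpotent) N (lt_top_iff_ne_top.2 hN))
  set c := g * a * g⁻¹
  have hcN : c ∈ N := (mem_normalizer_iff.1 hgN' a).1 (le_normalizer (mem_zpowers a))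
  have hcA : c ∉ zpowers a := fun h => hgN (mem_normalizer_zpowers_iff.2 h)
  have h2a : 2 ∣ orderOf a := ha ▸ dvd_pow_self 2 (by omega)
  have hc2 := sq_mem_zpowers_of_mem_normalizer hG h2 ha (by omega) hC hcN
  have hc := sq_eq_pow_orderOf_div_two_of_conj_eq_inv h2 h2a hcA hc2
    (conj_eq_inv_of_sq_mem_zpowers h2 ha hC hcA (mem_normalizer_zpowers_iff.1 hcN) hc2)
  have hc4 : c ^ 2 ^ 2 = 1 := by
    rw [sq 2, pow_mul, hc, ← pow_mul, Nat.div_mul_cancel h2a, pow_orderOf_eq_one]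
  have hco : orderOf c = 2 ^ m := ha ▸ MulEquiv.orderOf_eq (MulAut.conj g) a
  have := orderOf_dvd_of_pow_eq_one hc4
  rw [hco, Nat.pow_dvd_pow_iff_le_right one_lt_two] at this
  omega

theorem zpowers_normal_of_forall_orderOf_le (hG : IsPGroup 2 G)
    (h2 : {x : G | orderOf x = 2}.Subsingleton) {a : G} {m : ℕ}
    (hmax : ∀ x : G, orderOf x ≤ orderOf a) (ha : orderOf a = 2 ^ m) (hm : 2 ≤ m) :
    (zpowers a).Normal := by
  rcases hm.eq_or_lt with rfl | hm3
  · refine normal_of_forall_sq_mem fun x => mem_zpowers_of_sq_eq_one h2 (by rw [ha]; norm_num) ?_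
    rw [← pow_mul]
    exact orderOf_dvd_iff_pow_eq_one.1 ((hG.orderOf_dvd_of_le (hmax x)).trans (by rw [ha]; rfl))
  · exact normalizer_eq_top_iff.1 <| normalizer_zpowers_eq_top hG h2 ha hm3 fun x hx =>
      mem_zpowers_of_commute hG h2 hx (hmax x)

theorem exists_conj_eq_inv_of_not_commute (hG : IsPGroup 2 G)
    (h2 : {x : G | orderOf x = 2}.Subsingleton) {a g : G}
    (hmax : ∀ x : G, orderOf x ≤ orderOf a) (hag : ¬Commute a g) :
    ∃ b, b * a * b⁻¹ = a⁻¹ ∧ b ^ 2 = a ^ (orderOf a / 2) ∧ b ∉ zpowers a ∧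
      (zpowers a).index = 2 := by
  have hC : ∀ x, Commute a x → x ∈ zpowers a := fun x hx =>
    mem_zpowers_of_commute hG h2 hx (hmax x)
  have hgA : g ∉ zpowers a := by
    intro h
    obtain ⟨k, rfl⟩ := mem_zpowers_iff.1 h
    exact hag ((Commute.refl a).zpow_right k)
  obtain ⟨m, ha⟩ := IsPGroup.iff_orderOf.1 hG a
  have hm : 2 ≤ m := by
    by_contra! hm
    have hg1 : g ≠ 1 := by rintro rfl; exact hag (Commute.one_right a)
    have hga := hG.orderOf_dvd_of_le (hmax g)
    have ha2 : orderOf a ∣ 2 ^ 1 := ha ▸ Nat.pow_dvd_pow 2 (by omega)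
    have hg2 : g ^ 2 = 1 := by simpa using orderOf_dvd_iff_pow_eq_one.1 (hga.trans ha2)
    exact hgA (mem_zpowers_of_sq_eq_one h2 ((hG.dvd_orderOf hg1).trans hga) hg2)
  have hA := zpowers_normal_of_forall_orderOf_le hG h2 hmax ha hm
  have hinv : ∀ x ∉ zpowers a, x * a * x⁻¹ = a⁻¹ ∧ x ^ 2 ∈ zpowers a := fun x hx =>
    have hx2 := sq_mem_zpowers_of_mem_normalizer hG h2 ha hm hC
      (normalizer_eq_top_iff.2 hA ▸ mem_top x)
    ⟨conj_eq_inv_of_sq_mem_zpowers h2 ha hC hx (hA.conj_mem a (mem_zpowers a) x) hx2, hx2⟩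
  obtain ⟨hgi, hg2⟩ := hinv g hgA
  refine ⟨g, hgi, sq_eq_pow_orderOf_div_two_of_conj_eq_inv h2 (ha ▸ dvd_pow_self 2 (by omega))
    hgA hg2 hgi, hgA, index_eq_two_iff'.2 ⟨g⁻¹, fun x => xor_iff_iff_not.2 ⟨fun hx hxA => ?_,
    fun hx => ?_⟩⟩⟩
  · exact hgA (by simpa using mul_mem hx (inv_mem hxA))
  · refine hC _ (mul_inv_eq_iff_eq_mul.1 ?_).symm
    calc g⁻¹ * x * a * (g⁻¹ * x)⁻¹ = g⁻¹ * (x * a * x⁻¹) * g := by group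
      _ = a := by rw [(hinv x hx).1, ← hgi]; group

end Involution

def zmodPowHom {n : ℕ} (a : G) (ha : a ^ n = 1) : Multiplicative (ZMod n) →* G :=
  AddMonoidHom.toMultiplicativeLeft <|
    ZMod.lift n ⟨zmultiplesHom _ (Additive.ofMul a), by simpa using congrArg Additive.ofMul ha⟩

section zmodPowHom

variable {n : ℕ} {a : G} (ha : a ^ n = 1)

@[simp]
theorem zmodPowHom_ofAdd_intCast (k : ℤ) : zmodPowHom a ha (.ofAdd k) = a ^ k := by
  simp [zmodPowHom, ZMod.lift_coe]

@[simp]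
theorem zmodPowHom_ofAdd_natCast (k : ℕ) : zmodPowHom a ha (.ofAdd k) = a ^ k := by
  simpa using zmodPowHom_ofAdd_intCast ha k

theorem zmodPowHom_mem_zpowers (i : ZMod n) : zmodPowHom a ha (.ofAdd i) ∈ zpowers a := by
  obtain ⟨k, rfl⟩ := ZMod.intCast_surjective i
  simp

theorem zmodPowHom_mul_eq_mul_neg {b : G} (hab : b * a * b⁻¹ = a⁻¹) (i : ZMod n) :
    zmodPowHom a ha (.ofAdd i) * b = b * zmodPowHom a ha (.ofAdd (-i)) := by
  obtain ⟨k, rfl⟩ := ZMod.intCast_surjective i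
  have : b * a ^ (-k) * b⁻¹ = a ^ k := by rw [← conj_zpow, hab, inv_zpow', neg_neg]
  rw [← Int.cast_neg, zmodPowHom_ofAdd_intCast, zmodPowHom_ofAdd_intCast, ← this]
  group

theorem zmodPowHom_injective (ha' : orderOf a = n) : Function.Injective (zmodPowHom a ha) := by
  rw [injective_iff_map_eq_one]
  intro i hi
  obtain ⟨k, hk⟩ := ZMod.intCast_surjective i.toAdd
  rw [← ofAdd_toAdd i, ← hk, zmodPowHom_ofAdd_intCast, ← orderOf_dvd_iff_zpow_eq_one, ha',
    ← ZMod.intCast_zmod_eq_zero_iff_dvd] at hi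
  rw [← ofAdd_toAdd i, ← hk, hi, ofAdd_zero]

end zmodPowHom

namespace QuaternionGroup

variable {n : ℕ}

def lift (a b : G) (ha : a ^ (2 * n) = 1) (hb : b ^ 2 = a ^ n) (hab : b * a * b⁻¹ = a⁻¹) :
    QuaternionGroup n →* G where
  toFun
    | .a i => zmodPowHom a ha (.ofAdd i)
    | .xa i => b * zmodPowHom a ha (.ofAdd i)
  map_one' := map_one (zmodPowHom a ha)
  map_mul' := by
    have hψ := zmodPowHom_mul_eq_mul_neg ha hab
    have hn : zmodPowHom a ha (.ofAdd n) = b ^ 2 := by rw [hb, zmodPowHom_ofAdd_natCast]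
    rintro (i | i) (j | j)
    · exact map_mul (zmodPowHom a ha) (.ofAdd i) (.ofAdd j)
    · simp only [a_mul_xa, ← mul_assoc, hψ, sub_eq_neg_add, ofAdd_add, map_mul]
    · simp only [xa_mul_a, mul_assoc, ofAdd_add, map_mul]
    · change zmodPowHom a ha (.ofAdd (n + j - i)) =
        b * zmodPowHom a ha (.ofAdd i) * (b * zmodPowHom a ha (.ofAdd j))
      rw [add_sub_assoc, sub_eq_neg_add, ofAdd_add, ofAdd_add, map_mul, map_mul, hn,
        mul_assoc b, ← mul_assoc _ b, hψ]
      simp only [sq, mul_assoc]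

section lift

variable {a b : G} {ha : a ^ (2 * n) = 1} {hb : b ^ 2 = a ^ n} {hab : b * a * b⁻¹ = a⁻¹}

@[simp]
theorem lift_a (i : ZMod (2 * n)) : lift a b ha hb hab (.a i) = zmodPowHom a ha (.ofAdd i) := rfl

@[simp]
theorem lift_xa (i : ZMod (2 * n)) : lift a b ha hb hab (.xa i) = b * zmodPowHom a ha (.ofAdd i) :=
  rfl

theorem lift_injective (ha' : orderOf a = 2 * n) (hbA : b ∉ zpowers a) :
    Function.Injective (lift a b ha hb hab) := by
  rw [injective_iff_map_eq_one]
  rintro (i | i) h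
  · rw [lift_a, ← map_one (zmodPowHom a ha)] at h
    rw [ofAdd_eq_one.1 (zmodPowHom_injective ha ha' h)]
    rfl
  · rw [lift_xa, mul_eq_one_iff_eq_inv] at h
    exact absurd (h ▸ inv_mem (zmodPowHom_mem_zpowers ha i)) hbA

end lift

noncomputable def mulEquivOfIndexEqTwo [Finite G] [NeZero n] {a b : G} (ha : orderOf a = 2 * n)
    (hb : b ^ 2 = a ^ n) (hab : b * a * b⁻¹ = a⁻¹) (hbA : b ∉ zpowers a)
    (hindex : (zpowers a).index = 2) : QuaternionGroup n ≃* G :=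
  MulEquiv.ofBijective (lift a b (ha ▸ pow_orderOf_eq_one a) hb hab)
    ((lift_injective ha hbA).bijective_of_nat_card_le (by
      rw [← (zpowers a).card_mul_index, Nat.card_zpowers, ha, hindex, Nat.card_eq_fintype_card,
        QuaternionGroup.card]
      omega))

end QuaternionGroup

end

theorem unique_involution_cyclic_or_quaternion
    (lam : ℕ) (hlam : 3 ≤ lam)
    (G : Type*) [Group G] (hcard : Nat.card G = 2 ^ lam)
    (huniq : ∃! H : Subgroup G, Nat.card H = 2) :
    IsCyclic G ∨ Nonempty (G ≃* QuaternionGroup (2 ^ (lam - 2))) := by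
  have : Finite G := Nat.finite_of_card_ne_zero (by simp [hcard])
  have hG : IsPGroup 2 G := IsPGroup.of_card hcard
  have h2 := subsingleton_orderOf_eq_two_of_existsUnique huniq
  obtain ⟨a, hmax⟩ := Finite.exists_max (orderOf : G → ℕ)
  by_cases hcomm : ∀ g, Commute a g
  · exact Or.inl ⟨a, fun g => mem_zpowers_of_commute hG h2 (hcomm g) (hmax g)⟩
  obtain ⟨g, hg⟩ := not_forall.1 hcomm
  obtain ⟨b, hinv, hsq, hb, hindex⟩ := exists_conj_eq_inv_of_not_commute hG h2 hmax hg
  have ha : orderOf a = 2 * 2 ^ (lam - 2) := by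
    have := (zpowers a).card_mul_index
    rw [Nat.card_zpowers, hindex, hcard, ← Nat.sub_add_cancel (by omega : 2 ≤ lam),
      pow_add] at this
    omega
  rw [ha, Nat.mul_div_cancel_left _ two_pos] at hsq
  exact Or.inr ⟨(QuaternionGroup.mulEquivOfIndexEqTwo ha hsq hinv hb hindex).symm⟩
end
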